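/- arXiv:2004.00858 — 9 statements merged into one kernel-verified Lean document; each statement's English description precedes it below -/
import Mathlib

section
/- For every fixed s ≥ 0, the function μ ↦ θ(s,μ) is continuously differentiable on (0,+∞) with derivative ∂θ/∂μ(s,μ) = −3s/(2μ²) if μ > 3s, ∂θ/∂μ(s,μ) = −9(μ−s)s/(4μ³) if s ≤ μ ≤ 3s, and ∂θ/∂μ(s,μ) = 0 if μ < s; moreover μ ↦ ∂θ/∂μ(s,μ) is locally Lipschitz continuous on (0,+∞). Consequently, for every fixed x ∈ ℝⁿ with x ≥ 0, Θ(x,·) is continuously differentiable on (0,+∞) and its derivative ∂Θ/∂μ(x,·) is locally Lipschitz continuous on (0,+∞). -/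
/-!
For `μ > 0` one has `θ(s, μ) = ϑ(s / μ)` for a single profile `ϑ` (a line, a parabola and the
constant `1`) whose pieces meet tangentially at `t = 1/3` and `t = 1`, so `ϑ` is `C¹` and the
chain rule gives `∂θ/∂μ`. For `s ≥ 0` this derivative equals `min (max F₁ F₂) 0`, where `F₁`, `F₂`
are the two smooth branch formulas, hence it is locally Lipschitz on `(0, ∞)`.
-/

open Filter Set
open scoped NNReal

/-- The spare-smoothing kernel θ(s,μ). -/
noncomputable def phi (s μ : ℝ) : ℝ :=
  if s < μ / 3 then 3 / (2 * μ) * s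
  else if s ≤ μ then -(9 / (8 * μ ^ 2)) * (s - μ) ^ 2 + 1
  else 1

/-- ∂θ/∂s(s,μ). -/
noncomputable def phiS (s μ : ℝ) : ℝ :=
  if s < μ / 3 then 3 / (2 * μ)
  else if s ≤ μ then 9 / (4 * μ ^ 2) * (μ - s)
  else 0

/-- ∂θ/∂μ(s,μ) (for s ≥ 0). -/
noncomputable def phiM (s μ : ℝ) : ℝ :=
  if 3 * s < μ then -(3 * s) / (2 * μ ^ 2)
  else if s ≤ μ then -(9 * (μ - s) * s) / (4 * μ ^ 3)
  else 0

/-- Θ(x,μ) = Σ_i θ(x_i,μ). -/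
noncomputable def Phi {n : ℕ} (x : EuclideanSpace ℝ (Fin n)) (μ : ℝ) : ℝ :=
  ∑ i, phi (x i) μ

/-- ∇ₓΘ(x,μ), the gradient of Θ(·,μ). -/
noncomputable def gradPhi {n : ℕ} (x : EuclideanSpace ℝ (Fin n)) (μ : ℝ) :
    EuclideanSpace ℝ (Fin n) := WithLp.toLp 2 (fun i => phiS (x i) μ)

/-- ‖x‖₀, the number of nonzero entries of x. -/
noncomputable def norm0 {n : ℕ} (x : EuclideanSpace ℝ (Fin n)) : ℕ :=
  Nat.card {i // x i ≠ 0}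

/-- μ(t) = (α₀/(t+1)^β + μ*)/2. -/
noncomputable def muFun (α₀ β μs t : ℝ) : ℝ := (α₀ / (t + 1) ^ β + μs) / 2

theorem hasDerivWithinAt_of_eqOn_of_isClosed {F : Type*} [NormedAddCommGroup F]
    [NormedSpace ℝ F] {f g : ℝ → F} {f' : F} {s : Set ℝ} {x : ℝ} (hs : IsClosed s)
    (hfg : EqOn f g s) (hg : x ∈ s → HasDerivAt g f' x) : HasDerivWithinAt f f' s x := by
  by_cases hx : x ∈ s
  · exact (hg hx).hasDerivWithinAt.congr hfg (hfg hx)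
  · exact HasFDerivWithinAt.of_notMem_closure (by rwa [hs.closure_eq])

theorem LipschitzWith.comp_locallyLipschitzOn {α β γ : Type*} [PseudoEMetricSpace α]
    [PseudoEMetricSpace β] [PseudoEMetricSpace γ] {K : ℝ≥0} {g : β → γ} {f : α → β}
    {s : Set α} (hg : LipschitzWith K g) (hf : LocallyLipschitzOn s f) :
    LocallyLipschitzOn s (g ∘ f) := fun _ hx ↦ by
  obtain ⟨K', t, ht, hft⟩ := hf hx
  exact ⟨K * K', t, ht, hg.comp_lipschitzOnWith hft⟩

theorem LocallyLipschitzOn.sum {α ι E : Type*} [PseudoEMetricSpace α]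
    [SeminormedAddCommGroup E] {s : Set α} {f : ι → α → E} (t : Finset ι)
    (hf : ∀ i ∈ t, LocallyLipschitzOn s (f i)) :
    LocallyLipschitzOn s fun x ↦ ∑ i ∈ t, f i x := by
  classical
  induction t using Finset.induction_on with
  | empty => simpa using (LipschitzWith.const (0 : E)).locallyLipschitz.locallyLipschitzOn
  | insert i t hi ih =>
    simp_rw [Finset.sum_insert hi]
    exact (hf i (Finset.mem_insert_self i t)).add
      (ih fun j hj ↦ hf j (Finset.mem_insert_of_mem hj))

noncomputable def phiProfile (t : ℝ) : ℝ :=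
  if t < 1 / 3 then 3 / 2 * t
  else if t ≤ 1 then -(9 / 8) * (t - 1) ^ 2 + 1
  else 1

noncomputable def phiProfileDeriv (t : ℝ) : ℝ :=
  if t < 1 / 3 then 3 / 2
  else if t ≤ 1 then 9 / 4 * (1 - t)
  else 0

theorem hasDerivAt_phiProfile (t : ℝ) : HasDerivAt phiProfile (phiProfileDeriv t) t := by
  have hlin : HasDerivWithinAt phiProfile (phiProfileDeriv t) (Iic (1 / 3)) t := by
    refine hasDerivWithinAt_of_eqOn_of_isClosed (g := fun t ↦ 3 / 2 * t) isClosed_Iic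
      (fun u (hu : u ≤ 1 / 3) ↦ ?_) fun (ht : t ≤ 1 / 3) ↦ ?_
    · unfold phiProfile; split_ifs <;> nlinarith
    · refine ((hasDerivAt_id' t).const_mul (3 / 2 : ℝ)).congr_deriv ?_
      unfold phiProfileDeriv; split_ifs <;> linarith
  have hquad : HasDerivWithinAt phiProfile (phiProfileDeriv t) (Icc (1 / 3) 1) t := by
    refine hasDerivWithinAt_of_eqOn_of_isClosed (g := fun t ↦ -(9 / 8) * (t - 1) ^ 2 + 1)
      isClosed_Icc (fun u ⟨hu₁, hu₂⟩ ↦ ?_) fun ⟨ht₁, ht₂⟩ ↦ ?_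
    · unfold phiProfile; split_ifs <;> nlinarith
    · refine ((((hasDerivAt_id' t).sub_const 1).pow 2).const_mul (-(9 / 8) : ℝ)
        |>.add_const 1).congr_deriv ?_
      unfold phiProfileDeriv; split_ifs <;> nlinarith
  have hconst : HasDerivWithinAt phiProfile (phiProfileDeriv t) (Ici 1) t := by
    refine hasDerivWithinAt_of_eqOn_of_isClosed (g := fun _ ↦ 1) isClosed_Ici
      (fun u (hu : 1 ≤ u) ↦ ?_) fun (ht : 1 ≤ t) ↦ ?_
    · unfold phiProfile; split_ifs <;> nlinarith
    · refine (hasDerivAt_const t (1 : ℝ)).congr_deriv ?_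
      unfold phiProfileDeriv; split_ifs <;> linarith
  have hall := (hlin.union hquad).union hconst
  rwa [Iic_union_Icc_eq_Iic (by norm_num), Iic_union_Ici, hasDerivWithinAt_univ] at hall

theorem phi_eq_phiProfile_div (s : ℝ) {μ : ℝ} (hμ : 0 < μ) : phi s μ = phiProfile (s / μ) := by
  have h₁ : s < μ / 3 ↔ s / μ < 1 / 3 := by
    rw [div_lt_iff₀ hμ]; constructor <;> intro <;> linarith
  have h₂ : s ≤ μ ↔ s / μ ≤ 1 := (div_le_one hμ).symm
  unfold phi phiProfile
  simp only [h₁, h₂]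
  split_ifs
  · field_simp
  · field_simp
  · rfl

theorem phiM_eq_phiProfileDeriv_div_mul (s : ℝ) {μ : ℝ} (hμ : 0 < μ) :
    phiM s μ = phiProfileDeriv (s / μ) * (-s / μ ^ 2) := by
  have h₁ : 3 * s < μ ↔ s / μ < 1 / 3 := by
    rw [div_lt_iff₀ hμ]; constructor <;> intro <;> linarith
  have h₂ : s ≤ μ ↔ s / μ ≤ 1 := (div_le_one hμ).symm
  unfold phiM phiProfileDeriv
  simp only [h₁, h₂]
  split_ifs
  · field_simp
  · field_simp
  · simp

theorem hasDerivAt_phi (s : ℝ) {μ : ℝ} (hμ : 0 < μ) :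
    HasDerivAt (fun μ' ↦ phi s μ') (phiM s μ) μ := by
  have hdiv : HasDerivAt (fun μ' ↦ s / μ') (-s / μ ^ 2) μ := by
    simpa [div_eq_mul_inv] using (hasDerivAt_inv hμ.ne').const_mul s
  rw [phiM_eq_phiProfileDeriv_div_mul s hμ]
  refine ((hasDerivAt_phiProfile (s / μ)).comp μ hdiv).congr_of_eventuallyEq ?_
  filter_upwards [Ioi_mem_nhds hμ] with μ' hμ' using phi_eq_phiProfile_div s hμ'

theorem phiM_eq_min_max {s μ : ℝ} (hs : 0 ≤ s) (hμ : 0 < μ) :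
    phiM s μ = min (max (-(3 * s) / (2 * μ ^ 2)) (-(9 * (μ - s) * s) / (4 * μ ^ 3))) 0 := by
  have hdiff : -(3 * s) / (2 * μ ^ 2) - -(9 * (μ - s) * s) / (4 * μ ^ 3)
      = 3 * s * (μ - 3 * s) / (4 * μ ^ 3) := by
    field_simp
    ring
  have hlin : -(3 * s) / (2 * μ ^ 2) ≤ 0 :=
    div_nonpos_of_nonpos_of_nonneg (by linarith) (by positivity)
  unfold phiM
  split_ifs
  · have hdiff_nonneg : 0 ≤ 3 * s * (μ - 3 * s) / (4 * μ ^ 3) :=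
      div_nonneg (by nlinarith) (by positivity)
    rw [max_eq_left (by linarith), min_eq_left hlin]
  · have hdiff_nonpos : 3 * s * (μ - 3 * s) / (4 * μ ^ 3) ≤ 0 :=
      div_nonpos_of_nonpos_of_nonneg (by nlinarith) (by positivity)
    have hquad : -(9 * (μ - s) * s) / (4 * μ ^ 3) ≤ 0 :=
      div_nonpos_of_nonpos_of_nonneg (by nlinarith) (by positivity)
    rw [max_eq_right (by linarith), min_eq_left hquad]
  · have hquad : 0 ≤ -(9 * (μ - s) * s) / (4 * μ ^ 3) := div_nonneg (by nlinarith) (by positivity)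
    rw [min_eq_right (hquad.trans (le_max_right _ _))]

theorem locallyLipschitzOn_phiM {s : ℝ} (hs : 0 ≤ s) :
    LocallyLipschitzOn (Ioi 0) (phiM s) := by
  have hpieces : LocallyLipschitzOn (Ioi 0)
      (fun μ : ℝ ↦ (-(3 * s) / (2 * μ ^ 2), -(9 * (μ - s) * s) / (4 * μ ^ 3))) := by
    refine ContDiffOn.locallyLipschitzOn (convex_Ioi 0) ?_
    refine ContDiffOn.prodMk ?_ ?_ <;>
      exact ContDiffOn.div (by fun_prop) (by fun_prop) fun μ (hμ : 0 < μ) ↦ by positivity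
  have hclip : LipschitzWith 1 fun p : ℝ × ℝ ↦ min (max p.1 p.2) 0 :=
    lipschitzWith_max.min_const 0
  intro μ hμ
  obtain ⟨K, t, ht, hKt⟩ := hclip.comp_locallyLipschitzOn hpieces hμ
  refine ⟨K, t ∩ Ioi 0, inter_mem ht self_mem_nhdsWithin, fun x hx y hy ↦ ?_⟩
  rw [phiM_eq_min_max hs hx.2, phiM_eq_min_max hs hy.2]
  exact hKt hx.1 hy.1

theorem hasDerivAt_Phi {n : ℕ} (x : EuclideanSpace ℝ (Fin n)) {μ : ℝ} (hμ : 0 < μ) :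
    HasDerivAt (fun μ' ↦ Phi x μ') (∑ i, phiM (x i) μ) μ := by
  simpa [Phi] using HasDerivAt.fun_sum fun i _ ↦ hasDerivAt_phi (x i) hμ

theorem stmt2 {n : ℕ} :
    (∀ s : ℝ, 0 ≤ s →
      (∀ μ : ℝ, 0 < μ → HasDerivAt (fun μ' => phi s μ') (phiM s μ) μ) ∧
      ContinuousOn (fun μ => phiM s μ) (Ioi 0) ∧
      (∀ μ₀ ∈ Ioi (0 : ℝ), ∃ K : ℝ≥0, ∃ U ∈ nhdsWithin μ₀ (Ioi (0 : ℝ)),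
        LipschitzOnWith K (fun μ => phiM s μ) U)) ∧
    (∀ x : EuclideanSpace ℝ (Fin n), (∀ i, 0 ≤ x i) →
      (∀ μ : ℝ, 0 < μ → HasDerivAt (fun μ' => Phi x μ') (∑ i, phiM (x i) μ) μ) ∧
      ContinuousOn (fun μ => ∑ i, phiM (x i) μ) (Ioi 0) ∧
      (∀ μ₀ ∈ Ioi (0 : ℝ), ∃ K : ℝ≥0, ∃ U ∈ nhdsWithin μ₀ (Ioi (0 : ℝ)),
        LipschitzOnWith K (fun μ => ∑ i, phiM (x i) μ) U)) := by
  refine ⟨fun s hs ↦ ?_, fun x hx ↦ ?_⟩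
  · have hlip := locallyLipschitzOn_phiM hs
    exact ⟨fun μ hμ ↦ hasDerivAt_phi s hμ, hlip.continuousOn, hlip⟩
  · have hlip : LocallyLipschitzOn (Ioi 0) fun μ ↦ ∑ i, phiM (x i) μ :=
      LocallyLipschitzOn.sum _ fun i _ ↦ locallyLipschitzOn_phiM (hx i)
    exact ⟨fun μ hμ ↦ hasDerivAt_Phi x hμ, hlip.continuousOn, hlip⟩
end

section
/- Let 0 < μ̲ ≤ μ̄ and let X = {x ∈ ℝⁿ : 0 ≤ x ≤ v} with v ∈ ℝⁿ, v ≥ 0. Then the maps (x,μ) ↦ ∇ₓΘ(x,μ) (where (∇ₓΘ(x,μ))_i = ∂θ/∂s(x_i,μ)) and (x,μ) ↦ ∂Θ/∂μ(x,μ) (equal to Σ_{i=1}^n ∂θ/∂μ(x_i,μ)) are bounded and globally Lipschitz continuous on X × [μ̲, μ̄]. -/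
/-!
On `μ > 0` both partial derivatives are a smooth factor times the same ramp
`max 0 (min (μ - s) (2μ/3))`: `∂θ/∂s = 9/(4μ²) · ramp` and `∂θ/∂μ = -9s/(4μ³) · ramp`.
The ramp is globally Lipschitz and the factors are `C¹` on the compact convex rectangles
`[0, vᵢ] × [μ̲, μ̄]`, so each coordinate is Lipschitz there; Lipschitz continuity passes to
the gradient and to the sum, and boundedness follows because the domain is bounded.
-/

open Filter Set
open scoped NNReal

open Bornology

section Lipschitz

variable {α : Type*} [PseudoMetricSpace α] {s : Set α}

lemma LipschitzOnWith.isBounded_image {β : Type*} [PseudoMetricSpace β] {f : α → β} {K : ℝ≥0}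
    (hf : LipschitzOnWith K f s) (hs : IsBounded s) : IsBounded (f '' s) := by
  obtain ⟨C, hC⟩ := Metric.isBounded_iff.1 hs
  refine Metric.isBounded_iff.2 ⟨K * C, ?_⟩
  rintro _ ⟨x, hx, rfl⟩ _ ⟨y, hy, rfl⟩
  exact (hf.dist_le_mul x hx y hy).trans (by gcongr; exact hC hx hy)

lemma LipschitzOnWith.congr {β : Type*} [PseudoMetricSpace β] {f g : α → β} {K : ℝ≥0}
    (hf : LipschitzOnWith K f s) (h : EqOn f g s) : LipschitzOnWith K g s :=
  fun x hx y hy => by rw [← h hx, ← h hy]; exact hf hx hy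

lemma LipschitzOnWith.exists_lipschitzOnWith_mul {f g : α → ℝ} {Kf Kg : ℝ≥0}
    (hf : LipschitzOnWith Kf f s) (hg : LipschitzOnWith Kg g s) (hs : IsBounded s) :
    ∃ K, LipschitzOnWith K (fun x => f x * g x) s := by
  obtain ⟨R, hR⟩ := isBounded_iff_forall_norm_le.1 ((hf.prodMk hg).isBounded_image hs)
  -- multiplication is `C¹`, hence Lipschitz on the ball containing all values of `(f, g)`
  obtain ⟨K, hK⟩ := ((contDiff_fst.mul contDiff_snd).contDiffOn (n := 1)
    (s := Metric.closedBall (0 : ℝ × ℝ) R)).exists_lipschitzOnWith one_ne_zero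
    (convex_closedBall 0 R) (isCompact_closedBall 0 R)
  exact ⟨K * max Kf Kg, hK.comp (hf.prodMk hg)
    fun x hx => mem_closedBall_zero_iff.2 (hR _ (mem_image_of_mem _ hx))⟩

lemma exists_lipschitzOnWith_pi {ι : Type*} [Fintype ι] {β : ι → Type*}
    [∀ i, PseudoEMetricSpace (β i)] {f : α → ∀ i, β i}
    (h : ∀ i, ∃ K, LipschitzOnWith K (fun x => f x i) s) : ∃ K, LipschitzOnWith K f s := by
  choose K hK using h
  refine ⟨Finset.univ.sup K, fun x hx y hy => edist_pi_le_iff.2 fun i => (hK i hx hy).trans ?_⟩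
  gcongr
  exact Finset.le_sup (Finset.mem_univ i)

lemma exists_lipschitzOnWith_sum {ι E : Type*} [SeminormedAddCommGroup E] (t : Finset ι)
    {f : ι → α → E} (h : ∀ i ∈ t, ∃ K, LipschitzOnWith K (f i) s) :
    ∃ K, LipschitzOnWith K (fun x => ∑ i ∈ t, f i x) s := by
  classical
  induction t using Finset.induction_on with
  | empty => exact ⟨0, by simpa using LipschitzWith.const (0 : E) |>.lipschitzOnWith⟩
  | insert a t ha ih =>
    obtain ⟨Ka, hKa⟩ := h a (Finset.mem_insert_self a t)
    obtain ⟨Kt, hKt⟩ := ih fun i hi => h i (Finset.mem_insert_of_mem hi)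
    exact ⟨Ka + Kt, by simpa only [Finset.sum_insert ha] using hKa.add hKt⟩

end Lipschitz

noncomputable def ramp (s μ : ℝ) : ℝ := max 0 (min (μ - s) (2 / 3 * μ))

lemma exists_lipschitzWith_ramp : ∃ K, LipschitzWith K (fun p : ℝ × ℝ => ramp p.1 p.2) :=
  ⟨_, ((LipschitzWith.prod_snd.sub LipschitzWith.prod_fst).min
    ((lipschitzWith_smul (2 / 3 : ℝ)).comp LipschitzWith.prod_snd)).const_max 0⟩

lemma phiS_eq_mul_ramp {s μ : ℝ} (hμ : 0 < μ) : phiS s μ = 9 / (4 * μ ^ 2) * ramp s μ := by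
  unfold phiS ramp
  split_ifs with h₁ h₂
  · rw [min_eq_right (by linarith), max_eq_right (by linarith)]
    field_simp; ring
  · rw [min_eq_left (by linarith), max_eq_right (by linarith)]
  · rw [min_eq_left (by linarith), max_eq_left (by linarith), mul_zero]

lemma phiM_eq_mul_ramp {s μ : ℝ} (hμ : 0 < μ) :
    phiM s μ = -(9 * s / (4 * μ ^ 3)) * ramp s μ := by
  unfold phiM ramp
  split_ifs with h₁ h₂
  · rw [min_eq_right (by linarith), max_eq_right (by linarith)]
    field_simp; ring
  · rw [min_eq_left (by linarith), max_eq_right (by linarith)]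
    field_simp
  · rw [min_eq_left (by linarith), max_eq_left (by linarith), mul_zero]

lemma exists_lipschitzOnWith_of_eqOn_mul_ramp {f c : ℝ × ℝ → ℝ} {s : Set (ℝ × ℝ)}
    (hc : ContDiffOn ℝ 1 c s) (hconv : Convex ℝ s) (hs : IsCompact s)
    (hf : EqOn f (fun p => c p * ramp p.1 p.2) s) : ∃ K, LipschitzOnWith K f s := by
  obtain ⟨Kc, hKc⟩ := hc.exists_lipschitzOnWith one_ne_zero hconv hs
  obtain ⟨Kr, hKr⟩ := exists_lipschitzWith_ramp
  obtain ⟨K, hK⟩ := hKc.exists_lipschitzOnWith_mul hKr.lipschitzOnWith hs.isBounded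
  exact ⟨K, hK.congr hf.symm⟩

section Rectangle

variable {μlo : ℝ} (hμlo : 0 < μlo) (a b μhi : ℝ)
include hμlo

lemma exists_lipschitzOnWith_phiS :
    ∃ K, LipschitzOnWith K (fun p => phiS p.1 p.2) (Icc a b ×ˢ Icc μlo μhi) :=
  have hpos (p : ℝ × ℝ) (hp : p ∈ Icc a b ×ˢ Icc μlo μhi) : 0 < p.2 := hμlo.trans_le hp.2.1
  exists_lipschitzOnWith_of_eqOn_mul_ramp
    (contDiffOn_const.div (by fun_prop) fun p hp => by have := hpos p hp; positivity)
    ((convex_Icc a b).prod (convex_Icc μlo μhi)) (isCompact_Icc.prod isCompact_Icc)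
    fun p hp => phiS_eq_mul_ramp (hpos p hp)

lemma exists_lipschitzOnWith_phiM :
    ∃ K, LipschitzOnWith K (fun p => phiM p.1 p.2) (Icc a b ×ˢ Icc μlo μhi) :=
  have hpos (p : ℝ × ℝ) (hp : p ∈ Icc a b ×ˢ Icc μlo μhi) : 0 < p.2 := hμlo.trans_le hp.2.1
  exists_lipschitzOnWith_of_eqOn_mul_ramp
    ((ContDiffOn.div (by fun_prop) (by fun_prop) fun p hp => by
      have := hpos p hp; positivity).neg)
    ((convex_Icc a b).prod (convex_Icc μlo μhi)) (isCompact_Icc.prod isCompact_Icc)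
    fun p hp => phiM_eq_mul_ramp (hpos p hp)

end Rectangle

section Euclidean

variable {ι : Type*} [Fintype ι]

lemma isBounded_setOf_forall_mem_Icc (a b : ι → ℝ) :
    IsBounded {x : EuclideanSpace ℝ ι | ∀ i, a i ≤ x i ∧ x i ≤ b i} :=
  ((PiLp.antilipschitzWith_ofLp 2 _).isBounded_preimage (Metric.isBounded_Icc a b)).subset
    fun _ hx => ⟨fun i => (hx i).1, fun i => (hx i).2⟩

lemma exists_lipschitzOnWith_comp_coord {f : ℝ × ℝ → ℝ} {t : Set (ℝ × ℝ)}
    {s : Set (EuclideanSpace ℝ ι × ℝ)} (hf : ∃ K, LipschitzOnWith K f t) (i : ι)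
    (hst : MapsTo (fun p => (p.1 i, p.2)) s t) :
    ∃ K, LipschitzOnWith K (fun p => f (p.1 i, p.2)) s := by
  obtain ⟨K, hK⟩ := hf
  have hcoord : LipschitzWith _ fun p : EuclideanSpace ℝ ι × ℝ => (p.1 i, p.2) :=
    ((LipschitzWith.eval i).comp ((PiLp.lipschitzWith_ofLp 2 _).comp
      LipschitzWith.prod_fst)).prodMk LipschitzWith.prod_snd
  exact ⟨_, hK.comp hcoord.lipschitzOnWith hst⟩

end Euclidean

theorem stmt3_general {n : ℕ} (v : EuclideanSpace ℝ (Fin n))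
    (μlo μhi : ℝ) (hμlo : 0 < μlo) :
    (∃ M : ℝ, ∀ p : EuclideanSpace ℝ (Fin n) × ℝ,
        p ∈ {x : EuclideanSpace ℝ (Fin n) | ∀ i, 0 ≤ x i ∧ x i ≤ v i} ×ˢ Icc μlo μhi →
        ‖gradPhi p.1 p.2‖ ≤ M) ∧
    (∃ K : ℝ≥0, LipschitzOnWith K
        (fun p : EuclideanSpace ℝ (Fin n) × ℝ => gradPhi p.1 p.2)
        ({x : EuclideanSpace ℝ (Fin n) | ∀ i, 0 ≤ x i ∧ x i ≤ v i} ×ˢ Icc μlo μhi)) ∧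
    (∃ M : ℝ, ∀ p : EuclideanSpace ℝ (Fin n) × ℝ,
        p ∈ {x : EuclideanSpace ℝ (Fin n) | ∀ i, 0 ≤ x i ∧ x i ≤ v i} ×ˢ Icc μlo μhi →
        |∑ i, phiM (p.1 i) p.2| ≤ M) ∧
    (∃ K : ℝ≥0, LipschitzOnWith K
        (fun p : EuclideanSpace ℝ (Fin n) × ℝ => ∑ i, phiM (p.1 i) p.2)
        ({x : EuclideanSpace ℝ (Fin n) | ∀ i, 0 ≤ x i ∧ x i ≤ v i} ×ˢ Icc μlo μhi)) := by
  set X := {x : EuclideanSpace ℝ (Fin n) | ∀ i, 0 ≤ x i ∧ x i ≤ v i} ×ˢ Icc μlo μhi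
  have hX : IsBounded X :=
    (isBounded_setOf_forall_mem_Icc 0 fun i => v i).prod (Metric.isBounded_Icc μlo μhi)
  have hcoord (i : Fin n) : MapsTo (fun p => (p.1 i, p.2)) X (Icc 0 (v i) ×ˢ Icc μlo μhi) :=
    fun _ hp => ⟨hp.1 i, hp.2⟩
  obtain ⟨K₁, hK₁⟩ : ∃ K, LipschitzOnWith K (fun p => gradPhi p.1 p.2) X := by
    obtain ⟨K, hK⟩ := exists_lipschitzOnWith_pi fun i => exists_lipschitzOnWith_comp_coord
      (exists_lipschitzOnWith_phiS hμlo 0 (v i) μhi) i (hcoord i)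
    exact ⟨_, (PiLp.lipschitzWith_toLp 2 _).comp_lipschitzOnWith hK⟩
  obtain ⟨K₂, hK₂⟩ := exists_lipschitzOnWith_sum Finset.univ fun i _ =>
    exists_lipschitzOnWith_comp_coord (exists_lipschitzOnWith_phiM hμlo 0 (v i) μhi) i (hcoord i)
  obtain ⟨M₁, hM₁⟩ := isBounded_iff_forall_norm_le.1 (hK₁.isBounded_image hX)
  obtain ⟨M₂, hM₂⟩ := isBounded_iff_forall_norm_le.1 (hK₂.isBounded_image hX)
  exact ⟨⟨M₁, fun p hp => hM₁ _ (mem_image_of_mem _ hp)⟩, ⟨K₁, hK₁⟩,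
    ⟨M₂, fun p hp => hM₂ _ (mem_image_of_mem _ hp)⟩, ⟨K₂, hK₂⟩⟩

theorem stmt3 {n : ℕ} (v : EuclideanSpace ℝ (Fin n)) (hv : ∀ i, 0 ≤ v i)
    (μlo μhi : ℝ) (hμlo : 0 < μlo) (hle : μlo ≤ μhi) :
    (∃ M : ℝ, ∀ p : EuclideanSpace ℝ (Fin n) × ℝ,
        p ∈ {x : EuclideanSpace ℝ (Fin n) | ∀ i, 0 ≤ x i ∧ x i ≤ v i} ×ˢ Icc μlo μhi →
        ‖gradPhi p.1 p.2‖ ≤ M) ∧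
    (∃ K : ℝ≥0, LipschitzOnWith K
        (fun p : EuclideanSpace ℝ (Fin n) × ℝ => gradPhi p.1 p.2)
        ({x : EuclideanSpace ℝ (Fin n) | ∀ i, 0 ≤ x i ∧ x i ≤ v i} ×ˢ Icc μlo μhi)) ∧
    (∃ M : ℝ, ∀ p : EuclideanSpace ℝ (Fin n) × ℝ,
        p ∈ {x : EuclideanSpace ℝ (Fin n) | ∀ i, 0 ≤ x i ∧ x i ≤ v i} ×ˢ Icc μlo μhi →
        |∑ i, phiM (p.1 i) p.2| ≤ M) ∧
    (∃ K : ℝ≥0, LipschitzOnWith K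
        (fun p : EuclideanSpace ℝ (Fin n) × ℝ => ∑ i, phiM (p.1 i) p.2)
        ({x : EuclideanSpace ℝ (Fin n) | ∀ i, 0 ≤ x i ∧ x i ≤ v i} ×ˢ Icc μlo μhi)) :=
  stmt3_general v μlo μhi hμlo
end

section
/- Let Ω ⊆ ℝⁿ be a nonempty, closed, bounded and convex set, γ > 0, h : [0,+∞) → ℝⁿ a continuous function with h(t) ∈ Ω for all t ≥ 0, and let x : [0,+∞) → ℝⁿ be continuously differentiable with x(0) ∈ Ω and ẋ(t) = γ(−x(t) + h(t)) for all t > 0. Then x(t) ∈ Ω for all t ≥ 0. -/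
open Filter Set
open scoped NNReal

/-! Separate `x T` from `Ω` by a closed half-space `{y | ℓ y ≤ u}`. Along the flow,
`f = ℓ ∘ x - u` satisfies `f' = γ (ℓ h - u) - γ f ≤ -γ f`, so `exp (γ t) f t` is antitone and
`f` stays nonpositive: every closed half-space containing `Ω` is invariant, hence so is `Ω`. -/

theorem nonpos_of_hasDerivWithinAt_le_neg_mul {f f' : ℝ → ℝ} {γ : ℝ}
    (hf : ∀ t ∈ Ici (0 : ℝ), HasDerivWithinAt f (f' t) (Ici 0) t)
    (hf' : ∀ t > 0, f' t ≤ -γ * f t) (h0 : f 0 ≤ 0) :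
    ∀ t ∈ Ici (0 : ℝ), f t ≤ 0 := by
  have hF : ∀ t ∈ Ici (0 : ℝ), HasDerivWithinAt (fun s => Real.exp (γ * s) * f s)
      (Real.exp (γ * t) * (γ * f t + f' t)) (Ici 0) t := by
    intro t ht
    have hexp : HasDerivAt (fun s => Real.exp (γ * s)) (Real.exp (γ * t) * γ) t := by
      simpa using ((hasDerivAt_id t).const_mul γ).exp
    exact (hexp.hasDerivWithinAt.mul (hf t ht)).congr_deriv (by ring)
  have hanti : AntitoneOn (fun s => Real.exp (γ * s) * f s) (Ici 0) := by
    refine antitoneOn_of_hasDerivWithinAt_nonpos (convex_Ici 0)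
      (fun t ht => (hF t ht).continuousWithinAt)
      (fun t ht => (hF t (interior_subset ht)).mono interior_subset) (fun t ht => ?_)
    rw [interior_Ici] at ht
    exact mul_nonpos_of_nonneg_of_nonpos (Real.exp_pos _).le (by linarith [hf' t ht])
  intro t ht
  have hdecay : Real.exp (γ * t) * f t ≤ f 0 := by
    simpa using hanti self_mem_Ici ht ht
  exact nonpos_of_mul_nonpos_right (hdecay.trans h0) (Real.exp_pos _)

theorem le_of_hasDerivWithinAt_relaxation {E : Type*} [NormedAddCommGroup E] [NormedSpace ℝ E]
    (ℓ : StrongDual ℝ E) (u : ℝ) {γ : ℝ} (hγ : 0 ≤ γ) {x x' h : ℝ → E}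
    (hder : ∀ t ∈ Ici (0 : ℝ), HasDerivWithinAt x (x' t) (Ici 0) t)
    (hode : ∀ t > (0 : ℝ), x' t = γ • (-(x t) + h t))
    (hh : ∀ t > (0 : ℝ), ℓ (h t) ≤ u) (hx0 : ℓ (x 0) ≤ u) :
    ∀ t ∈ Ici (0 : ℝ), ℓ (x t) ≤ u := by
  have hf : ∀ t ∈ Ici (0 : ℝ), HasDerivWithinAt (fun s => ℓ (x s) - u) (ℓ (x' t)) (Ici 0) t :=
    fun t ht => (ℓ.hasFDerivAt.comp_hasDerivWithinAt t (hder t ht)).sub_const u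
  have hf' : ∀ t > (0 : ℝ), ℓ (x' t) ≤ -γ * (ℓ (x t) - u) := by
    intro t ht
    have hflow : ℓ (x' t) = γ * (ℓ (h t) - u) - γ * (ℓ (x t) - u) := by
      rw [hode t ht, map_smul, map_add, map_neg, smul_eq_mul]
      ring
    have hforce : γ * (ℓ (h t) - u) ≤ 0 :=
      mul_nonpos_of_nonneg_of_nonpos hγ (sub_nonpos.mpr (hh t ht))
    linarith
  intro t ht
  exact sub_nonpos.mp (nonpos_of_hasDerivWithinAt_le_neg_mul hf hf' (sub_nonpos.mpr hx0) t ht)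

theorem IsClosed.mem_of_hasDerivWithinAt_relaxation {E : Type*} [NormedAddCommGroup E]
    [NormedSpace ℝ E] {Ω : Set E} (hcl : IsClosed Ω) (hconv : Convex ℝ Ω) {γ : ℝ} (hγ : 0 ≤ γ)
    {x x' h : ℝ → E} (hder : ∀ t ∈ Ici (0 : ℝ), HasDerivWithinAt x (x' t) (Ici 0) t)
    (hode : ∀ t > (0 : ℝ), x' t = γ • (-(x t) + h t))
    (hΩ : ∀ t > (0 : ℝ), h t ∈ Ω) (hx0 : x 0 ∈ Ω) :
    ∀ t ∈ Ici (0 : ℝ), x t ∈ Ω := by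
  intro T hT
  by_contra hxT
  obtain ⟨ℓ, u, hsep, hlt⟩ := geometric_hahn_banach_closed_point hconv hcl hxT
  have hxT_le := le_of_hasDerivWithinAt_relaxation ℓ u hγ hder hode
    (fun t ht => (hsep _ (hΩ t ht)).le) (hsep _ hx0).le T hT
  linarith

theorem stmt4_general {n : ℕ} (Ω : Set (EuclideanSpace ℝ (Fin n)))
    (hcl : IsClosed Ω) (hconv : Convex ℝ Ω)
    (γ : ℝ) (hγ : 0 < γ)
    (h : ℝ → EuclideanSpace ℝ (Fin n))
    (hΩ : ∀ t ∈ Ici (0 : ℝ), h t ∈ Ω)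
    (x x' : ℝ → EuclideanSpace ℝ (Fin n))
    (hder : ∀ t ∈ Ici (0 : ℝ), HasDerivWithinAt x (x' t) (Ici 0) t)
    (hx0 : x 0 ∈ Ω)
    (hode : ∀ t > (0 : ℝ), x' t = γ • (-(x t) + h t)) :
    ∀ t ∈ Ici (0 : ℝ), x t ∈ Ω :=
  hcl.mem_of_hasDerivWithinAt_relaxation hconv hγ.le hder hode
    (fun t ht => hΩ t (le_of_lt ht)) hx0

theorem stmt4 {n : ℕ} (Ω : Set (EuclideanSpace ℝ (Fin n))) (hne : Ω.Nonempty)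
    (hcl : IsClosed Ω) (hbd : Bornology.IsBounded Ω) (hconv : Convex ℝ Ω)
    (γ : ℝ) (hγ : 0 < γ)
    (h : ℝ → EuclideanSpace ℝ (Fin n)) (hc : ContinuousOn h (Ici 0))
    (hΩ : ∀ t ∈ Ici (0 : ℝ), h t ∈ Ω)
    (x x' : ℝ → EuclideanSpace ℝ (Fin n))
    (hder : ∀ t ∈ Ici (0 : ℝ), HasDerivWithinAt x (x' t) (Ici 0) t)
    (hx'c : ContinuousOn x' (Ici 0))
    (hx0 : x 0 ∈ Ω)
    (hode : ∀ t > (0 : ℝ), x' t = γ • (-(x t) + h t)) :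
    ∀ t ∈ Ici (0 : ℝ), x t ∈ Ω :=
  stmt4_general Ω hcl hconv γ hγ h hΩ x x' hder hx0 hode
end

section
/- Let x : [0,+∞) → ℝⁿ be the solution of the network (NN) with initial point x₀ ∈ X. Then there exists ϱ > 0 such that the energy function E(t) = f(x(t)) + λΘ(x(t),μ(t)) + λϱμ(t) satisfies E'(t) ≤ −(1/γ)‖ẋ(t)‖² for all t > 0; in particular E is nonincreasing on [0,+∞). -/
open Filter Set
open scoped NNReal

/-! For μ > 0 the kernel is θ(s,μ) = 1 - 9/8 · ((μ - s)₊² - (μ/3 - s)₊²) / μ², so it is C¹ in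
(s,μ), with ∂θ/∂μ ≥ -1/μ. Writing w = ∇f(x) + λ∇ₓΘ(x,μ), along the trajectory
dE/dt = ⟪w, ẋ⟫ + λ (Σᵢ ∂θ/∂μ(xᵢ,μ) + ϱ) μ̇.
Since ẋ = γ(P_X(x - w) - x) with x ∈ X and X convex, the variational inequality of the projection
gives ⟪w, ẋ⟫ ≤ -‖ẋ‖²/γ. The second term is nonpositive as soon as ϱ ≥ 2n/μ*, because
μ ≥ μ*/2 and μ̇ ≤ 0. -/

open Topology
open scoped RealInnerProductSpace

noncomputable def posSq (s : ℝ) : ℝ := max s 0 ^ 2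

lemma hasDerivAt_posSq (a : ℝ) : HasDerivAt posSq (2 * max a 0) a := by
  rcases lt_trichotomy a 0 with ha | rfl | ha
  · have hzero : (fun _ => (0 : ℝ)) =ᶠ[𝓝 a] posSq :=
      eventually_of_mem (Iio_mem_nhds ha) fun y (hy : y < 0) => by simp [posSq, max_eq_right hy.le]
    simpa [max_eq_right ha.le] using (hasDerivAt_const a (0 : ℝ)).congr_of_eventuallyEq hzero.symm
  · rw [hasDerivAt_iff_isLittleO_nhds_zero]
    have hbound : posSq =O[𝓝 0] fun y : ℝ => y ^ 2 :=
      Asymptotics.IsBigO.of_bound 1 <| Eventually.of_forall fun y => by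
        rw [one_mul, posSq, Real.norm_of_nonneg (sq_nonneg _), Real.norm_of_nonneg (sq_nonneg _)]
        rcases le_total y 0 with hy | hy <;> simp [hy, sq_nonneg]
    have hzero : posSq 0 = 0 := by simp [posSq]
    simpa [hzero] using hbound.trans_isLittleO (Asymptotics.isLittleO_pow_id one_lt_two)
  · have hsq : (fun y => y ^ 2) =ᶠ[𝓝 a] posSq :=
      eventually_of_mem (Ioi_mem_nhds ha) fun y (hy : 0 < y) => by simp [posSq, max_eq_left hy.le]
    simpa [max_eq_left ha.le, mul_comm] using (hasDerivAt_pow 2 a).congr_of_eventuallyEq hsq.symm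

lemma phi_eq_posSq {μ : ℝ} (hμ : 0 < μ) (s : ℝ) :
    phi s μ = 1 - 9 / 8 * ((posSq (μ - s) - posSq (μ / 3 - s)) / μ ^ 2) := by
  unfold phi posSq
  split_ifs
  · rw [max_eq_left (by linarith), max_eq_left (by linarith)]
    field_simp; ring
  · rw [max_eq_left (by linarith), max_eq_right (by linarith)]
    field_simp; ring
  · rw [max_eq_right (by linarith), max_eq_right (by linarith)]
    simp

/-- The left-hand side is the derivative of the right-hand side of `phi_eq_posSq`, in the form
the chain and quotient rules produce it. -/
lemma phi_partials_eq {μ : ℝ} (hμ : 0 < μ) (s s' m' : ℝ) :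
    -(9 / 8 * (((2 * max (μ - s) 0 * (m' - s') - 2 * max (μ / 3 - s) 0 * (m' / 3 - s')) * μ ^ 2
        - (posSq (μ - s) - posSq (μ / 3 - s)) * (2 * μ * m')) / (μ ^ 2) ^ 2))
      = phiS s μ * s' + phiM s μ * m' := by
  unfold phiS phiM posSq
  split_ifs <;> try (exfalso; linarith)
  · rw [max_eq_left (by linarith), max_eq_left (by linarith)]
    field_simp; ring
  · rw [max_eq_left (by linarith), max_eq_right (by linarith)]
    field_simp; ring
  · rw [max_eq_right (by linarith), max_eq_right (by linarith)]
    simp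

lemma HasDerivWithinAt.phi {u m : ℝ → ℝ} {u' m' t : ℝ} {s : Set ℝ}
    (hu : HasDerivWithinAt u u' s t) (hm : HasDerivWithinAt m m' s t) (hmt : 0 < m t) :
    HasDerivWithinAt (fun τ => phi (u τ) (m τ))
      (phiS (u t) (m t) * u' + phiM (u t) (m t) * m') s t := by
  have hA := (hasDerivAt_posSq (m t - u t)).comp_hasDerivWithinAt t (hm.sub hu)
  have hB := (hasDerivAt_posSq (m t / 3 - u t)).comp_hasDerivWithinAt t ((hm.div_const 3).sub hu)
  have hrep :=
    (((hA.sub hB).div (hm.pow 2) (pow_ne_zero 2 hmt.ne')).const_mul (9 / 8)).const_sub 1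
  have hpos : ∀ᶠ τ in 𝓝[s] t, 0 < m τ := hm.continuousWithinAt.eventually_const_lt hmt
  have := hrep.congr_of_eventuallyEq (hpos.mono fun τ hτ => phi_eq_posSq hτ _) (phi_eq_posSq hmt _)
  refine this.congr_deriv ?_
  rw [← phi_partials_eq hmt]
  norm_num

lemma neg_inv_le_phiM (s : ℝ) {μ : ℝ} (hμ : 0 < μ) : -μ⁻¹ ≤ phiM s μ := by
  unfold phiM
  split_ifs
  · rw [neg_div, neg_le_neg_iff, div_le_iff₀ (by positivity), inv_mul_eq_div, le_div_iff₀ hμ]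
    nlinarith
  · rw [neg_div, neg_le_neg_iff, div_le_iff₀ (by positivity), inv_mul_eq_div, le_div_iff₀ hμ]
    nlinarith [mul_nonneg hμ.le (sq_nonneg (2 * s - μ)), pow_pos hμ 3]
  · simp [hμ.le]

lemma half_le_muFun {α₀ μs t : ℝ} (β : ℝ) (hα₀ : 0 ≤ α₀) (ht : -1 < t) :
    μs / 2 ≤ muFun α₀ β μs t := by
  have : 0 ≤ α₀ / (t + 1) ^ β := div_nonneg hα₀ (Real.rpow_nonneg (by linarith) β)
  unfold muFun
  linarith

noncomputable def muDeriv (α₀ β t : ℝ) : ℝ :=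
  -(α₀ * (β * (t + 1) ^ (β - 1)) / ((t + 1) ^ β) ^ 2) / 2

lemma hasDerivAt_muFun (α₀ β μs : ℝ) {t : ℝ} (ht : -1 < t) :
    HasDerivAt (muFun α₀ β μs) (muDeriv α₀ β t) t := by
  have ht1 : 0 < t + 1 := by linarith
  have hpow := ((hasDerivAt_id t).add_const 1).rpow_const (p := β) (Or.inl ht1.ne')
  refine ((((hasDerivAt_const t α₀).div hpow (Real.rpow_pos_of_pos ht1 β).ne').add_const
    μs).div_const 2).congr_deriv ?_
  simp only [muDeriv, id]
  ring

lemma muDeriv_nonpos {α₀ β t : ℝ} (hα₀ : 0 ≤ α₀) (hβ : 0 ≤ β) (ht : -1 < t) :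
    muDeriv α₀ β t ≤ 0 := by
  have : 0 ≤ α₀ * (β * (t + 1) ^ (β - 1)) / ((t + 1) ^ β) ^ 2 :=
    div_nonneg (mul_nonneg hα₀ (mul_nonneg hβ (Real.rpow_nonneg (by linarith) _))) (sq_nonneg _)
  rw [muDeriv]
  linarith

section Projection

variable {F : Type*} [NormedAddCommGroup F] [InnerProductSpace ℝ F]

lemma real_inner_sub_sub_nonpos_of_forall_norm_sub_le {K : Set F} (hK : Convex ℝ K) {z p : F}
    (hp : p ∈ K) (hnear : ∀ q ∈ K, ‖z - p‖ ≤ ‖z - q‖) {q : F} (hq : q ∈ K) :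
    ⟪z - p, q - p⟫ ≤ 0 := by
  have : Nonempty K := ⟨⟨p, hp⟩⟩
  have hbdd : BddBelow (range fun q : K => ‖z - q‖) :=
    ⟨0, by rintro r ⟨q, rfl⟩; exact norm_nonneg _⟩
  refine (norm_eq_iInf_iff_real_inner_le_zero hK hp).1 ?_ q hq
  exact le_antisymm (le_ciInf fun q => hnear q q.2) (ciInf_le hbdd ⟨p, hp⟩)

lemma real_inner_smul_sub_le_of_forall_norm_sub_le {K : Set F} (hK : Convex ℝ K) {y w p : F}
    (hy : y ∈ K) (hp : p ∈ K) (hnear : ∀ q ∈ K, ‖y - w - p‖ ≤ ‖y - w - q‖) {γ : ℝ} (hγ : 0 < γ) :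
    ⟪w, γ • (p - y)⟫ ≤ -(1 / γ) * ‖γ • (p - y)‖ ^ 2 := by
  have hvi := real_inner_sub_sub_nonpos_of_forall_norm_sub_le hK hp hnear hy
  have hsq : ‖y - p‖ ^ 2 ≤ ⟪w, y - p⟫ := by
    rw [sub_right_comm, inner_sub_left, real_inner_self_eq_norm_sq] at hvi
    linarith
  calc ⟪w, γ • (p - y)⟫ = -γ * ⟪w, y - p⟫ := by
        rw [real_inner_smul_right, ← neg_sub y p, inner_neg_right]; ring
    _ ≤ -γ * ‖y - p‖ ^ 2 := mul_le_mul_of_nonpos_left hsq (by linarith)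
    _ = -(1 / γ) * ‖γ • (p - y)‖ ^ 2 := by
        rw [norm_smul, norm_sub_rev, Real.norm_of_nonneg hγ.le]; field_simp

end Projection

section EuclideanSpace

variable {n : ℕ}

lemma inner_gradPhi (x y : EuclideanSpace ℝ (Fin n)) (μ : ℝ) :
    ⟪gradPhi x μ, y⟫ = ∑ i, phiS (x i) μ * y i := by
  simp [gradPhi, PiLp.inner_apply, mul_comm]

lemma HasDerivWithinAt.Phi {x : ℝ → EuclideanSpace ℝ (Fin n)} {x' : EuclideanSpace ℝ (Fin n)}
    {m : ℝ → ℝ} {m' t : ℝ} {s : Set ℝ}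
    (hx : HasDerivWithinAt x x' s t) (hm : HasDerivWithinAt m m' s t) (hmt : 0 < m t) :
    HasDerivWithinAt (fun τ => Phi (x τ) (m τ))
      (⟪gradPhi (x t) (m t), x'⟫ + (∑ i, phiM (x t i) (m t)) * m') s t := by
  have hcoord (i : Fin n) : HasDerivWithinAt (fun τ => x τ i) (x' i) s t :=
    (EuclideanSpace.proj (𝕜 := ℝ) i).hasFDerivAt.comp_hasDerivWithinAt t hx
  refine (HasDerivWithinAt.fun_sum fun i _ => (hcoord i).phi hm hmt).congr_deriv ?_
  rw [inner_gradPhi, Finset.sum_add_distrib, Finset.sum_mul]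

lemma neg_div_le_sum_phiM (x : EuclideanSpace ℝ (Fin n)) {c μ : ℝ} (hc : 0 < c) (hcμ : c ≤ μ) :
    -(n / c) ≤ ∑ i, phiM (x i) μ := by
  calc -(n / c) = ∑ _i : Fin n, -c⁻¹ := by simp [div_eq_mul_inv]
    _ ≤ ∑ i, phiM (x i) μ := Finset.sum_le_sum fun i _ =>
      (neg_le_neg (inv_anti₀ hc hcμ)).trans (neg_inv_le_phiM (x i) (hc.trans_le hcμ))

lemma hasDerivWithinAt_energy {f : EuclideanSpace ℝ (Fin n) → ℝ} {g x' : EuclideanSpace ℝ (Fin n)}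
    {x : ℝ → EuclideanSpace ℝ (Fin n)} {m : ℝ → ℝ} {m' t lam ϱ : ℝ} {s : Set ℝ}
    (hf : HasGradientAt f g (x t)) (hx : HasDerivWithinAt x x' s t)
    (hm : HasDerivWithinAt m m' s t) (hmt : 0 < m t) :
    HasDerivWithinAt (fun τ => f (x τ) + lam * Phi (x τ) (m τ) + lam * ϱ * m τ)
      (⟪g + lam • gradPhi (x t) (m t), x'⟫ + lam * (∑ i, phiM (x t i) (m t) + ϱ) * m') s t := by
  have hfx : HasDerivWithinAt (fun τ => f (x τ)) ⟪g, x'⟫ s t :=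
    hf.hasFDerivAt.comp_hasDerivWithinAt t hx
  refine ((hfx.add ((hx.Phi hm hmt).const_mul lam)).add (hm.const_mul (lam * ϱ))).congr_deriv ?_
  rw [inner_add_left, real_inner_smul_left]
  ring

lemma convex_box (v : EuclideanSpace ℝ (Fin n)) :
    Convex ℝ {x : EuclideanSpace ℝ (Fin n) | ∀ i, 0 ≤ x i ∧ x i ≤ v i} := by
  have hbox : {x : EuclideanSpace ℝ (Fin n) | ∀ i, 0 ≤ x i ∧ x i ≤ v i}
      = ⋂ i, EuclideanSpace.proj i ⁻¹' Icc 0 (v i) := by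
    ext
    simp
  rw [hbox]
  exact convex_iInter fun i => (convex_Icc 0 (v i)).linear_preimage (EuclideanSpace.proj i).toLinearMap

end EuclideanSpace

theorem stmt7_general {n : ℕ}
    (v : EuclideanSpace ℝ (Fin n))
    (X : Set (EuclideanSpace ℝ (Fin n)))
    (hX : X = {x : EuclideanSpace ℝ (Fin n) | ∀ i, 0 ≤ x i ∧ x i ≤ v i})
    (f : EuclideanSpace ℝ (Fin n) → ℝ)
    (f' : EuclideanSpace ℝ (Fin n) → EuclideanSpace ℝ (Fin n))
    (hf : ∀ y, HasGradientAt f (f' y) y)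
    (lam γ α₀ β μs : ℝ)
    (hlam : 0 < lam) (hγ : 0 < γ) (hα₀ : 0 < α₀) (hβ : 0 < β) (hμs : 0 < μs)
    (P : EuclideanSpace ℝ (Fin n) → EuclideanSpace ℝ (Fin n))
    (hP : ∀ z, P z ∈ X ∧ ∀ y ∈ X, ‖z - P z‖ ≤ ‖z - y‖)
    (x x' : ℝ → EuclideanSpace ℝ (Fin n))
    (hder : ∀ t ∈ Ici (0 : ℝ), HasDerivWithinAt x (x' t) (Ici 0) t)
    (hode : ∀ t ∈ Ici (0 : ℝ),
      x' t = γ • (P (x t - f' (x t) - lam • gradPhi (x t) (muFun α₀ β μs t)) - x t))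
    (hxX : ∀ t ∈ Ici (0 : ℝ), x t ∈ X)
    :
    ∃ ϱ : ℝ, 0 < ϱ ∧
      (∀ t > (0 : ℝ), ∃ E' : ℝ,
        HasDerivAt
          (fun τ => f (x τ) + lam * Phi (x τ) (muFun α₀ β μs τ) + lam * ϱ * muFun α₀ β μs τ)
          E' t ∧
        E' ≤ -(1 / γ) * ‖x' t‖ ^ 2) ∧
      AntitoneOn
        (fun t => f (x t) + lam * Phi (x t) (muFun α₀ β μs t) + lam * ϱ * muFun α₀ β μs t)
        (Ici 0) := by
  set μ := muFun α₀ β μs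
  set ϱ : ℝ := n / (μs / 2) + 1
  set E' : ℝ → ℝ := fun t =>
    ⟪f' (x t) + lam • gradPhi (x t) (μ t), x' t⟫
      + lam * (∑ i, phiM (x t i) (μ t) + ϱ) * muDeriv α₀ β t
  have hμ (t : ℝ) (ht : 0 ≤ t) : μs / 2 ≤ μ t := half_le_muFun β hα₀.le (by linarith)
  have hE (t : ℝ) (ht : 0 ≤ t) :
      HasDerivWithinAt (fun τ => f (x τ) + lam * Phi (x τ) (μ τ) + lam * ϱ * μ τ) (E' t) (Ici 0) t :=
    hasDerivWithinAt_energy (hf _) (hder t ht)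
      (hasDerivAt_muFun α₀ β μs (by linarith)).hasDerivWithinAt (by linarith [hμ t ht])
  have hE'_le (t : ℝ) (ht : 0 ≤ t) : E' t ≤ -(1 / γ) * ‖x' t‖ ^ 2 := by
    have hdescent : ⟪f' (x t) + lam • gradPhi (x t) (μ t), x' t⟫ ≤ -(1 / γ) * ‖x' t‖ ^ 2 := by
      obtain ⟨hPX, hPnear⟩ := hP (x t - (f' (x t) + lam • gradPhi (x t) (μ t)))
      rw [hode t ht, sub_sub]
      exact real_inner_smul_sub_le_of_forall_norm_sub_le (hX ▸ convex_box v) (hxX t ht) hPX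
        hPnear hγ
    have hcoef : 0 ≤ ∑ i, phiM (x t i) (μ t) + ϱ := by
      simp only [ϱ]
      linarith [neg_div_le_sum_phiM (x t) (half_pos hμs) (hμ t ht)]
    exact add_le_of_le_of_nonpos hdescent (mul_nonpos_of_nonneg_of_nonpos
      (mul_nonneg hlam.le hcoef) (muDeriv_nonpos hα₀.le hβ.le (by linarith)))
  refine ⟨ϱ, by positivity, fun t ht => ⟨E' t, (hE t ht.le).hasDerivAt (Ici_mem_nhds ht),
    hE'_le t ht.le⟩, ?_⟩
  refine antitoneOn_of_hasDerivWithinAt_nonpos (f' := E') (convex_Ici 0)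
    (fun t ht => (hE t ht).continuousWithinAt) (fun t ht => ?_) fun t ht => ?_
  · rw [interior_Ici] at ht ⊢
    exact ((hE t (le_of_lt ht)).hasDerivAt (Ici_mem_nhds ht)).hasDerivWithinAt
  · rw [interior_Ici] at ht
    exact (hE'_le t (le_of_lt ht)).trans 
      (mul_nonpos_of_nonpos_of_nonneg (neg_nonpos.2 (one_div_pos.2 hγ).le) (sq_nonneg _))

theorem stmt7 {n : ℕ}
    (v : EuclideanSpace ℝ (Fin n)) (hv : ∀ i, 0 ≤ v i)
    (X : Set (EuclideanSpace ℝ (Fin n)))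
    (hX : X = {x : EuclideanSpace ℝ (Fin n) | ∀ i, 0 ≤ x i ∧ x i ≤ v i})
    (f : EuclideanSpace ℝ (Fin n) → ℝ)
    (f' : EuclideanSpace ℝ (Fin n) → EuclideanSpace ℝ (Fin n))
    (hf : ∀ y, HasGradientAt f (f' y) y)
    (hconv : ConvexOn ℝ univ f)
    (hlip : LocallyLipschitz f')
    (lam γ α₀ β μs : ℝ)
    (hlam : 0 < lam) (hγ : 0 < γ) (hα₀ : 0 < α₀) (hβ : 0 < β) (hμs : 0 < μs)
    (P : EuclideanSpace ℝ (Fin n) → EuclideanSpace ℝ (Fin n))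
    (hP : ∀ z, P z ∈ X ∧ ∀ y ∈ X, ‖z - P z‖ ≤ ‖z - y‖)
    (x₀ : EuclideanSpace ℝ (Fin n)) (hx₀ : x₀ ∈ X)
    (x x' : ℝ → EuclideanSpace ℝ (Fin n))
    (hx0 : x 0 = x₀)
    (hder : ∀ t ∈ Ici (0 : ℝ), HasDerivWithinAt x (x' t) (Ici 0) t)
    (hode : ∀ t ∈ Ici (0 : ℝ),
      x' t = γ • (P (x t - f' (x t) - lam • gradPhi (x t) (muFun α₀ β μs t)) - x t))
    (hx'c : ContinuousOn x' (Ici 0))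
    (hxX : ∀ t ∈ Ici (0 : ℝ), x t ∈ X)
    :
    ∃ ϱ : ℝ, 0 < ϱ ∧
      (∀ t > (0 : ℝ), ∃ E' : ℝ,
        HasDerivAt
          (fun τ => f (x τ) + lam * Phi (x τ) (muFun α₀ β μs τ) + lam * ϱ * muFun α₀ β μs τ)
          E' t ∧
        E' ≤ -(1 / γ) * ‖x' t‖ ^ 2) ∧
      AntitoneOn
        (fun t => f (x t) + lam * Phi (x t) (muFun α₀ β μs t) + lam * ϱ * muFun α₀ β μs t)
        (Ici 0) :=
  stmt7_general v X hX f f' hf lam γ α₀ β μs hlam hγ hα₀ hβ hμs P hP x x' hder hode hxX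
end

section
/- Let x : [0,+∞) → ℝⁿ be the solution of the network (NN) with initial point x₀ ∈ X, and suppose Assumption 1 holds. Let T ≥ 0 be such that μ(t) ∈ (μ*/2, μ*) for all t > T. If for some index i and some T' ≥ T one has x_i(T') ≤ μ*/6, then x_i(t) = x_i(T') e^{−γ(t−T')} for all t ≥ T'; in particular x_i(t) → 0 as t → +∞. -/
open Filter Set
open scoped NNReal

/-! While `xᵢ < μ(t)/3`, the `i`-th entry of `∇ₓΘ(x, μ)` is `3/(2μ)`, so by Assumption 1 and
`μ(t) ≤ μ*` the `i`-th entry of `x - ∇f(x) - λ∇ₓΘ(x, μ)` is at most `v̄ + L_f - 3λ/(2μ) < 0`; the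
projection onto the box clamps it to `0`, leaving `ẋᵢ = -γ xᵢ`. As `μ(t) > μ*/2`, this holds
whenever `xᵢ ≤ μ*/6`, so at the level `μ*/6` the coordinate strictly decreases and it never
rises above that level after `T'`. Hence `xᵢ` solves `ẏ = -γ y` on `[T', ∞)`. -/

def Box {ι : Type*} (l u : ι → ℝ) : Set (EuclideanSpace ℝ ι) := {x | ∀ i, l i ≤ x i ∧ x i ≤ u i}

theorem Box.apply_eq_lower_of_isNearest {ι : Type*} [Fintype ι] [DecidableEq ι] {l u : ι → ℝ}
    {z p : EuclideanSpace ℝ ι} (hp : p ∈ Box l u) (hmin : ∀ y ∈ Box l u, ‖z - p‖ ≤ ‖z - y‖)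
    {i : ι} (hz : z i ≤ l i) : p i = l i := by
  set s := l i - p i
  have hy : p + EuclideanSpace.single i s ∈ Box l u := by
    intro j
    rcases eq_or_ne j i with rfl | hj
    · simpa [s] using (hp j).1.trans (hp j).2
    · simpa [hj] using hp j
  have hsq := pow_le_pow_left₀ (norm_nonneg _) (hmin _ hy) 2
  rw [← sub_sub, norm_sub_sq_real (z - p), EuclideanSpace.inner_single_right,
    PiLp.norm_single] at hsq
  simp only [PiLp.sub_apply, conj_trivial, Real.norm_eq_abs, sq_abs] at hsq
  nlinarith [(hp i).1]

theorem muFun_half_lt {α₀ β μs t : ℝ} (hα₀ : 0 < α₀) (ht : -1 < t) : μs / 2 < muFun α₀ β μs t := by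
  have : 0 < α₀ / (t + 1) ^ β := div_pos hα₀ (Real.rpow_pos_of_pos (by linarith) β)
  unfold muFun
  linarith

theorem continuousAt_muFun {α₀ β μs t : ℝ} (ht : -1 < t) : ContinuousAt (muFun α₀ β μs) t := by
  have hpos : 0 < t + 1 := by linarith
  unfold muFun
  exact ((continuousAt_const.div ((continuousAt_id.add continuousAt_const).rpow_const
    (Or.inl hpos.ne')) (Real.rpow_pos_of_pos hpos β).ne').add continuousAt_const).div_const 2

theorem muFun_le_of_forall_gt {α₀ β μs T t b : ℝ} (hT : -1 < T)
    (h : ∀ s > T, muFun α₀ β μs s ≤ b) (ht : T ≤ t) : muFun α₀ β μs t ≤ b := by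
  rcases ht.lt_or_eq with hTt | rfl
  · exact h t hTt
  · exact le_of_tendsto ((continuousAt_muFun hT).mono_left nhdsWithin_le_nhds)
      (eventually_nhdsWithin_of_forall (s := Ioi T) h)

theorem le_of_hasDerivWithinAt_neg_at_level {g g' : ℝ → ℝ} {a m t : ℝ}
    (hcont : ContinuousOn g (Ici a)) (hderiv : ∀ s ≥ a, HasDerivWithinAt g (g' s) (Ici s) s)
    (ha : g a ≤ m) (hlevel : ∀ s ≥ a, g s = m → g' s < 0) (ht : a ≤ t) : g t ≤ m :=
  image_le_of_deriv_right_lt_deriv_boundary (hcont.mono Icc_subset_Ici_self)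
    (fun s hs => hderiv s hs.1) ha (fun _ => hasDerivAt_const _ m)
    (fun s hs => hlevel s hs.1) ⟨ht, le_rfl⟩

theorem eq_mul_exp_of_hasDerivWithinAt_mul {g : ℝ → ℝ} {a k t : ℝ}
    (hcont : ContinuousOn g (Ici a)) (hderiv : ∀ s ≥ a, HasDerivWithinAt g (k * g s) (Ici s) s)
    (ht : a ≤ t) : g t = g a * Real.exp (k * (t - a)) := by
  set e : ℝ → ℝ := fun s => Real.exp (-k * (s - a))
  have he (s : ℝ) : HasDerivAt e (-k * e s) s := by
    simpa [e, mul_comm] using (((hasDerivAt_id s).sub_const a).const_mul (-k)).exp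
  have hconst := constant_of_has_deriv_right_zero (f := fun s => g s * e s)
    ((hcont.mono Icc_subset_Ici_self).mul (Real.continuous_exp.comp (by fun_prop)).continuousOn)
    (fun s hs => ((hderiv s hs.1).mul (he s).hasDerivWithinAt).congr_deriv (by ring))
    t ⟨ht, le_rfl⟩
  simp only [e, sub_self, mul_zero, Real.exp_zero, mul_one] at hconst
  rw [← hconst, mul_assoc, ← Real.exp_add]
  simp

theorem HasDerivWithinAt.euclideanSpace_apply {ι : Type*} [Fintype ι] {x : ℝ → EuclideanSpace ℝ ι}
    {x' : EuclideanSpace ℝ ι} {s : Set ℝ} {t : ℝ} (h : HasDerivWithinAt x x' s t) (i : ι) :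
    HasDerivWithinAt (fun u => x u i) (x' i) s t :=
  (EuclideanSpace.proj (𝕜 := ℝ) i).hasFDerivAt.comp_hasDerivWithinAt t h

noncomputable def networkField {n : ℕ} (P f' : EuclideanSpace ℝ (Fin n) → EuclideanSpace ℝ (Fin n))
    (lam γ μ : ℝ) (y : EuclideanSpace ℝ (Fin n)) : EuclideanSpace ℝ (Fin n) :=
  γ • (P (y - f' y - lam • gradPhi y μ) - y)

theorem networkField_apply_of_lt {n : ℕ} {v : EuclideanSpace ℝ (Fin n)}
    {P f' : EuclideanSpace ℝ (Fin n) → EuclideanSpace ℝ (Fin n)} {lam γ μ μs Lf : ℝ}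
    {y : EuclideanSpace ℝ (Fin n)} {i : Fin n}
    (hP : ∀ z, P z ∈ Box 0 v ∧ ∀ w ∈ Box 0 v, ‖z - P z‖ ≤ ‖z - w‖)
    (hy : y ∈ Box 0 v) (hf' : |f' y i| ≤ Lf) (hLf0 : 0 < Lf) (hμ : 0 < μ) (hμle : μ ≤ μs)
    (hA : μs < 3 * lam / (2 * ((⨆ j, v j) + Lf))) (hyi : y i < μ / 3) :
    networkField P f' lam γ μ y i = -γ * y i := by
  obtain ⟨hy0, hyv⟩ : 0 ≤ y i ∧ y i ≤ v i := hy i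
  have hv : v i ≤ ⨆ j, v j := le_ciSup (finite_range _).bddAbove i
  set c := (⨆ j, v j) + Lf with hc_def
  have hyc : y i - f' y i ≤ c := add_le_add (hyv.trans hv) (neg_le.mp (abs_le.mp hf').1)
  have hc : 0 < c := by linarith
  rw [lt_div_iff₀ (by positivity)] at hA
  have hzi : (y - f' y - lam • gradPhi y μ) i ≤ 0 := by
    have : c * (2 * μ) ≤ 3 * lam := by nlinarith
    simp only [PiLp.sub_apply, PiLp.smul_apply, gradPhi, phiS, if_pos hyi, smul_eq_mul]
    rw [mul_div_assoc', sub_nonpos, le_div_iff₀ (by positivity)]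
    nlinarith
  have hPi := Box.apply_eq_lower_of_isNearest (hP _).1 (hP _).2 hzi
  simp only [networkField, PiLp.smul_apply, PiLp.sub_apply, smul_eq_mul, hPi, Pi.zero_apply]
  ring

theorem stmt9_general {n : ℕ}
    (v : EuclideanSpace ℝ (Fin n))
    (X : Set (EuclideanSpace ℝ (Fin n)))
    (hX : X = {x : EuclideanSpace ℝ (Fin n) | ∀ i, 0 ≤ x i ∧ x i ≤ v i})
    (f' : EuclideanSpace ℝ (Fin n) → EuclideanSpace ℝ (Fin n))
    (lam γ α₀ β μs : ℝ)
    (hγ : 0 < γ) (hα₀ : 0 < α₀) (hμs : 0 < μs)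
    (P : EuclideanSpace ℝ (Fin n) → EuclideanSpace ℝ (Fin n))
    (hP : ∀ z, P z ∈ X ∧ ∀ y ∈ X, ‖z - P z‖ ≤ ‖z - y‖)
    (x x' : ℝ → EuclideanSpace ℝ (Fin n))
    (hder : ∀ t ∈ Ici (0 : ℝ), HasDerivWithinAt x (x' t) (Ici 0) t)
    (hode : ∀ t ∈ Ici (0 : ℝ),
      x' t = γ • (P (x t - f' (x t) - lam • gradPhi (x t) (muFun α₀ β μs t)) - x t))
    (hxX : ∀ t ∈ Ici (0 : ℝ), x t ∈ X)
    (Lf : ℝ) (hLf0 : 0 < Lf) (hLf : ∀ y ∈ X, ∀ i, |f' y i| ≤ Lf)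
    (hA1 : (∀ i, v i ≠ 0 → μs < v i) ∧
      μs < 3 * lam / (2 * ((⨆ i, v i) + Lf)) ∧ μs < 2 * lam / (n * Lf))
    (T : ℝ) (hT : 0 ≤ T)
    (hμT : ∀ t > T, muFun α₀ β μs t ∈ Ioo (μs / 2) μs)
    (i : Fin n) (T' : ℝ) (hT' : T ≤ T') (hxi : x T' i ≤ μs / 6) :
    (∀ t ≥ T', x t i = x T' i * Real.exp (-γ * (t - T'))) ∧
    Tendsto (fun t => x t i) atTop (nhds 0) := by
  subst hX
  have hIci : Ici T' ⊆ Ici 0 := Ici_subset_Ici.mpr (hT.trans hT')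
  have hμ_gt (t : ℝ) (ht : t ≥ T') : μs / 2 < muFun α₀ β μs t :=
    muFun_half_lt hα₀ (by linarith [hIci ht])
  have hμ_le (t : ℝ) (ht : t ≥ T') : muFun α₀ β μs t ≤ μs :=
    muFun_le_of_forall_gt (by linarith) (fun s hs => (hμT s hs).2.le) (hT'.trans ht)
  have hcont : ContinuousOn (fun t => x t i) (Ici T') := fun t ht =>
    ((hder t (hIci ht)).euclideanSpace_apply i).continuousWithinAt.mono hIci
  have hderiv (t : ℝ) (ht : t ≥ T') : HasDerivWithinAt (fun s => x s i) (x' t i) (Ici t) t :=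
    ((hder t (hIci ht)).euclideanSpace_apply i).mono (Ici_subset_Ici.mpr (hIci ht))
  have hdecay (t : ℝ) (ht : t ≥ T') (hlt : x t i < muFun α₀ β μs t / 3) :
      x' t i = -γ * x t i := by
    rw [hode t (hIci ht)]
    exact networkField_apply_of_lt hP (hxX t (hIci ht)) (hLf _ (hxX t (hIci ht)) i) hLf0
      (by linarith [hμ_gt t ht]) (hμ_le t ht) hA1.2.1 hlt
  have hsmall (t : ℝ) (ht : t ≥ T') : x t i < muFun α₀ β μs t / 3 := by
    have := le_of_hasDerivWithinAt_neg_at_level hcont hderiv hxi (fun s hs hs_eq => by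
      rw [hdecay s hs (by linarith [hμ_gt s hs])]; nlinarith) ht
    linarith [hμ_gt t ht]
  have hsol (t : ℝ) (ht : t ≥ T') : x t i = x T' i * Real.exp (-γ * (t - T')) :=
    eq_mul_exp_of_hasDerivWithinAt_mul hcont
      (fun s hs => (hderiv s hs).congr_deriv (hdecay s hs (hsmall s hs))) ht
  refine ⟨hsol, Tendsto.congr' (eventually_ge_atTop T' |>.mono fun t ht => (hsol t ht).symm) ?_⟩
  have hlin : Tendsto (fun t => -γ * (t - T')) atTop atBot := by
    simpa [sub_eq_add_neg] using
      (tendsto_atTop_add_const_right _ (-T') tendsto_id).const_mul_atTop_of_neg (neg_lt_zero.mpr hγ)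
  simpa using tendsto_const_nhds.mul (Real.tendsto_exp_atBot.comp hlin)

theorem stmt9 {n : ℕ}
    (v : EuclideanSpace ℝ (Fin n)) (hv : ∀ i, 0 ≤ v i)
    (X : Set (EuclideanSpace ℝ (Fin n)))
    (hX : X = {x : EuclideanSpace ℝ (Fin n) | ∀ i, 0 ≤ x i ∧ x i ≤ v i})
    (f : EuclideanSpace ℝ (Fin n) → ℝ)
    (f' : EuclideanSpace ℝ (Fin n) → EuclideanSpace ℝ (Fin n))
    (hf : ∀ y, HasGradientAt f (f' y) y)
    (hconv : ConvexOn ℝ univ f)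
    (hlip : LocallyLipschitz f')
    (lam γ α₀ β μs : ℝ)
    (hlam : 0 < lam) (hγ : 0 < γ) (hα₀ : 0 < α₀) (hβ : 0 < β) (hμs : 0 < μs)
    (P : EuclideanSpace ℝ (Fin n) → EuclideanSpace ℝ (Fin n))
    (hP : ∀ z, P z ∈ X ∧ ∀ y ∈ X, ‖z - P z‖ ≤ ‖z - y‖)
    (x₀ : EuclideanSpace ℝ (Fin n)) (hx₀ : x₀ ∈ X)
    (x x' : ℝ → EuclideanSpace ℝ (Fin n))
    (hx0 : x 0 = x₀)
    (hder : ∀ t ∈ Ici (0 : ℝ), HasDerivWithinAt x (x' t) (Ici 0) t)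
    (hode : ∀ t ∈ Ici (0 : ℝ),
      x' t = γ • (P (x t - f' (x t) - lam • gradPhi (x t) (muFun α₀ β μs t)) - x t))
    (hx'c : ContinuousOn x' (Ici 0))
    (hxX : ∀ t ∈ Ici (0 : ℝ), x t ∈ X)
    (hn : 0 < n)
    (Lf : ℝ) (hLf0 : 0 < Lf) (hLf : ∀ y ∈ X, ∀ i, |f' y i| ≤ Lf)
    (hA1 : (∀ i, v i ≠ 0 → μs < v i) ∧
      μs < 3 * lam / (2 * ((⨆ i, v i) + Lf)) ∧ μs < 2 * lam / (n * Lf))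
    (T : ℝ) (hT : 0 ≤ T)
    (hμT : ∀ t > T, muFun α₀ β μs t ∈ Ioo (μs / 2) μs)
    (i : Fin n) (T' : ℝ) (hT' : T ≤ T') (hxi : x T' i ≤ μs / 6) :
    (∀ t ≥ T', x t i = x T' i * Real.exp (-γ * (t - T'))) ∧
    Tendsto (fun t => x t i) atTop (nhds 0) :=
  stmt9_general v X hX f' lam γ α₀ β μs hγ hα₀ hμs P hP x x' hder hode hxX Lf hLf0 hLf hA1 T hT hμT
    i T' hT' hxi
end

section
/- Let x : [0,+∞) → ℝⁿ be the solution of the network (NN) with initial point x₀ ∈ X, and suppose Assumption 1 holds. Then every accumulation point x̄ of x(·) satisfies: for each i ∈ {1,…,n}, either x̄_i = 0 or x̄_i ≥ μ*/6; consequently I(x̄) = {i : x̄_i = 0}. Moreover, any two accumulation points x̂ and x̃ of x(·) satisfy I(x̂) = I(x̃). -/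
open Filter Set
open scoped NNReal

/-!
Once `μ(t) ∈ (μ*/2, μ*)`, a coordinate with `x_i < μ*/6 < μ/3` sits on the linear piece of `θ`,
where the penalty slope `3λ/(2μ)` exceeds `v̄ + L_f`. The argument of the projection then has a
nonpositive `i`-th coordinate, so the projection onto the box has `i`-th coordinate `0` and the
network reduces to `ẋ_i = -γ x_i`. Hence a coordinate that drops below `μ*/6` late enough stays
there and decays exponentially to `0`, while any other coordinate eventually stays `≥ μ*/6`.
Every accumulation point therefore vanishes exactly on the coordinates of the first kind.
-/

open Topology

section LinearDecay

variable {g g' : ℝ → ℝ} {γ c T : ℝ}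

lemma forall_lt_of_deriv_eq_neg_mul_below (hγ : 0 < γ) (hc : 0 < c)
    (hder : ∀ s ∈ Ici T, HasDerivWithinAt g (g' s) (Ici T) s)
    (hode : ∀ s ∈ Ici T, g s < c → g' s = -(γ * g s)) {t : ℝ} (ht : T ≤ t) (hgt : g t < c) :
    ∀ s ∈ Ici t, g s < c := by
  intro s hs
  -- `g` crosses a positive level `b < c` downwards only: there `g' = -γ b < 0`
  obtain ⟨b, hgb, hb0, hbc⟩ : ∃ b, g t ≤ b ∧ 0 < b ∧ b < c :=
    ⟨max (g t) (c / 2), le_max_left _ _, by positivity, max_lt hgt (by linarith)⟩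
  have hTr : ∀ r ∈ Icc t s, r ∈ Ici T := fun r hr => mem_Ici.2 (ht.trans hr.1)
  have hle := image_le_of_deriv_right_lt_deriv_boundary' (B := fun _ => b) (B' := 0)
    (fun r hr => ((hder r (hTr r hr)).continuousWithinAt).mono
      (Icc_subset_Ici_self.trans (Ici_subset_Ici.2 ht)))
    (fun r hr => (hder r (hTr r (Ico_subset_Icc_self hr))).mono
      (Ici_subset_Ici.2 (hTr r (Ico_subset_Icc_self hr))))
    hgb continuousOn_const (fun r _ => hasDerivWithinAt_const r _ b)
    (fun r hr hr_eq => by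
      rw [hode r (hTr r (Ico_subset_Icc_self hr)) (hr_eq ▸ hbc), hr_eq]
      simpa using mul_pos hγ hb0)
    ⟨hs, le_rfl⟩
  exact hle.trans_lt hbc

lemma eq_mul_exp_neg_of_hasDerivWithinAt_neg_mul
    (hder : ∀ s ∈ Ici T, HasDerivWithinAt g (-(γ * g s)) (Ici T) s) :
    ∀ s ∈ Ici T, g s = g T * Real.exp (-(γ * (s - T))) := by
  intro s hs
  set h : ℝ → ℝ := fun r => g r * Real.exp (γ * (r - T))
  have hderh : ∀ r ∈ Ici T, HasDerivWithinAt h 0 (Ici T) r := by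
    intro r hr
    have hexp : HasDerivAt (fun r => Real.exp (γ * (r - T))) (Real.exp (γ * (r - T)) * γ) r := by
      simpa using (((hasDerivAt_id r).sub_const T).const_mul γ).exp
    exact ((hder r hr).mul hexp.hasDerivWithinAt).congr_deriv (by ring)
  have hconst := constant_of_has_deriv_right_zero (a := T) (b := s)
    (fun r hr => (hderh r hr.1).continuousWithinAt.mono Icc_subset_Ici_self)
    (fun r hr => (hderh r hr.1).mono (Ici_subset_Ici.2 hr.1)) s ⟨hs, le_rfl⟩
  simp only [h, sub_self, mul_zero, Real.exp_zero, mul_one] at hconst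
  rw [← hconst, mul_assoc, ← Real.exp_add]
  simp

lemma tendsto_zero_or_eventually_ge_of_deriv_eq_neg_mul_below (hγ : 0 < γ) (hc : 0 < c)
    (hder : ∀ s ∈ Ici T, HasDerivWithinAt g (g' s) (Ici T) s)
    (hode : ∀ s ∈ Ici T, g s < c → g' s = -(γ * g s)) :
    Tendsto g atTop (𝓝 0) ∨ ∀ᶠ s in atTop, c ≤ g s := by
  by_cases hsmall : ∃ t ∈ Ici T, g t < c
  · obtain ⟨t, ht, hgt⟩ := hsmall
    have hlt := forall_lt_of_deriv_eq_neg_mul_below hγ hc hder hode ht hgt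
    have hTs : ∀ s ∈ Ici t, s ∈ Ici T := fun s hs => mem_Ici.2 (ht.trans hs)
    have hexp := eq_mul_exp_neg_of_hasDerivWithinAt_neg_mul (T := t) (γ := γ) (g := g) fun s hs =>
      hode s (hTs s hs) (hlt s hs) ▸ (hder s (hTs s hs)).mono (Ici_subset_Ici.2 ht)
    have hlin : Tendsto (fun s => γ * (s - t)) atTop atTop :=
      (tendsto_atTop_add_const_right _ (-t) tendsto_id).const_mul_atTop hγ
    refine Or.inl (Tendsto.congr' (eventually_atTop.2 ⟨t, fun s hs => (hexp s hs).symm⟩) ?_)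
    simpa using (Real.tendsto_exp_neg_atTop_nhds_zero.comp hlin).const_mul (g t)
  · push Not at hsmall
    exact Or.inr (eventually_atTop.2 ⟨T, hsmall⟩)

end LinearDecay

lemma eq_zero_or_le_and_eq_zero_iff_of_tendsto_comp {g : ℝ → ℝ} {u : ℕ → ℝ} {a c : ℝ}
    (hc : 0 < c) (hg : Tendsto g atTop (𝓝 0) ∨ ∀ᶠ t in atTop, c ≤ g t)
    (hu : Tendsto u atTop atTop) (ha : Tendsto (g ∘ u) atTop (𝓝 a)) :
    (a = 0 ∨ c ≤ a) ∧ (a = 0 ↔ Tendsto g atTop (𝓝 0)) := by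
  have hzero : Tendsto g atTop (𝓝 0) → a = 0 := fun h => tendsto_nhds_unique ha (h.comp hu)
  rcases hg with hg | hg
  · exact ⟨Or.inl (hzero hg), iff_of_true (hzero hg) hg⟩
  · have hca : c ≤ a := ge_of_tendsto ha (hu.eventually hg)
    exact ⟨Or.inr hca, ⟨fun h => by linarith, fun h => hzero h⟩⟩

lemma nonneg_and_lt_iff_eq_zero {a c : ℝ} (hc : 0 < c) (ha : a = 0 ∨ c ≤ a) :
    0 ≤ a ∧ a < c ↔ a = 0 := by
  constructor
  · rintro ⟨-, hac⟩
    exact ha.resolve_right (not_le.2 hac)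
  · rintro rfl
    exact ⟨le_rfl, hc⟩

lemma proj_box_apply_eq_zero {ι : Type*} [Fintype ι] [DecidableEq ι]
    {v z p : EuclideanSpace ℝ ι} (hp : ∀ j, 0 ≤ p j ∧ p j ≤ v j)
    (hmin : ∀ y : EuclideanSpace ℝ ι, (∀ j, 0 ≤ y j ∧ y j ≤ v j) → ‖z - p‖ ≤ ‖z - y‖)
    {i : ι} (hzi : z i ≤ 0) : p i = 0 := by
  set e := EuclideanSpace.single i (p i)
  have hq : ∀ j, 0 ≤ (p - e) j ∧ (p - e) j ≤ v j := by
    intro j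
    by_cases hj : j = i
    · subst hj
      simpa [e] using (hp j).1.trans (hp j).2
    · simpa [e, hj] using hp j
  have hsq : ‖z - (p - e)‖ ^ 2 = ‖z - p‖ ^ 2 + 2 * (p i * (z i - p i)) + p i ^ 2 := by
    rw [show z - (p - e) = (z - p) + e by abel, norm_add_sq_real,
      EuclideanSpace.inner_single_right, PiLp.norm_single]
    simp [sq_abs]
  have := pow_le_pow_left₀ (norm_nonneg _) (hmin _ hq) 2
  nlinarith [(hp i).1]

lemma sub_sub_mul_phiS_nonpos {s d V L lam μ μs : ℝ} (hsV : s ≤ V) (hdL : |d| ≤ L)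
    (hlam : 0 < lam) (hμ : 0 < μ) (hμμs : μ ≤ μs) (hs : s < μ / 3)
    (hA : μs < 3 * lam / (2 * (V + L))) :
    s - d - lam * phiS s μ ≤ 0 := by
  have hVL : 0 < V + L := by
    by_contra! h
    have : 3 * lam / (2 * (V + L)) ≤ 0 :=
      div_nonpos_of_nonneg_of_nonpos (by positivity) (by linarith)
    linarith
  have hslope : V + L < lam * phiS s μ := by
    rw [phiS, if_pos hs, ← mul_div_assoc, lt_div_iff₀ (by positivity)]
    rw [lt_div_iff₀ (by positivity)] at hA
    nlinarith
  linarith [neg_le_of_abs_le hdL]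

lemma eventually_muFun_mem_Ioo {α₀ β μs : ℝ} (hα₀ : 0 < α₀) (hβ : 0 < β) (hμs : 0 < μs) :
    ∀ᶠ t in atTop, muFun α₀ β μs t ∈ Ioo (μs / 2) μs := by
  have hpow : Tendsto (fun t : ℝ => (t + 1) ^ β) atTop atTop :=
    (tendsto_rpow_atTop hβ).comp (tendsto_atTop_add_const_right _ 1 tendsto_id)
  filter_upwards [(tendsto_const_nhds.div_atTop hpow).eventually_lt_const hμs,
    hpow.eventually_gt_atTop 0] with t hsmall hpos
  have hq : 0 < α₀ / (t + 1) ^ β := div_pos hα₀ hpos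
  rw [mem_Ioo, muFun]
  generalize α₀ / (t + 1) ^ β = q at hq hsmall ⊢
  constructor <;> linarith

lemma eventually_coord_deriv_eq_neg_mul_of_lt {n : ℕ} {v : EuclideanSpace ℝ (Fin n)}
    {X : Set (EuclideanSpace ℝ (Fin n))}
    (hX : X = {x : EuclideanSpace ℝ (Fin n) | ∀ i, 0 ≤ x i ∧ x i ≤ v i})
    {f' P : EuclideanSpace ℝ (Fin n) → EuclideanSpace ℝ (Fin n)} {lam γ α₀ β μs Lf : ℝ}
    (hlam : 0 < lam) (hα₀ : 0 < α₀) (hβ : 0 < β) (hμs : 0 < μs)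
    (hP : ∀ z, P z ∈ X ∧ ∀ y ∈ X, ‖z - P z‖ ≤ ‖z - y‖)
    (hLf : ∀ y ∈ X, ∀ i, |f' y i| ≤ Lf) (hA : μs < 3 * lam / (2 * ((⨆ i, v i) + Lf)))
    {x x' : ℝ → EuclideanSpace ℝ (Fin n)}
    (hode : ∀ t ∈ Ici (0 : ℝ),
      x' t = γ • (P (x t - f' (x t) - lam • gradPhi (x t) (muFun α₀ β μs t)) - x t))
    (hxX : ∀ t ∈ Ici (0 : ℝ), x t ∈ X) :
    ∀ᶠ t in atTop, ∀ i, x t i < μs / 6 → x' t i = -(γ * x t i) := by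
  filter_upwards [eventually_muFun_mem_Ioo hα₀ hβ hμs, eventually_ge_atTop 0]
    with t ⟨hμlo, hμhi⟩ ht i hxi
  have hxt : ∀ j, 0 ≤ x t j ∧ x t j ≤ v j := by simpa [hX] using hxX t ht
  rw [hode t ht]
  set z := x t - f' (x t) - lam • gradPhi (x t) (muFun α₀ β μs t)
  have hsmall : x t i < muFun α₀ β μs t / 3 := by linarith
  have hzi : z i ≤ 0 :=
    sub_sub_mul_phiS_nonpos ((hxt i).2.trans (le_ciSup (finite_range v).bddAbove i))
      (hLf _ (hxX t ht) i) hlam (by linarith) hμhi.le hsmall hA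
  have hPz : P z i = 0 := proj_box_apply_eq_zero (by simpa [hX] using (hP z).1)
    (fun y hy => (hP z).2 y (by simpa [hX] using hy)) hzi
  simp [hPz]

theorem stmt10_general {n : ℕ}
    (v : EuclideanSpace ℝ (Fin n))
    (X : Set (EuclideanSpace ℝ (Fin n)))
    (hX : X = {x : EuclideanSpace ℝ (Fin n) | ∀ i, 0 ≤ x i ∧ x i ≤ v i})
    (f' : EuclideanSpace ℝ (Fin n) → EuclideanSpace ℝ (Fin n))
    (lam γ α₀ β μs : ℝ)
    (hlam : 0 < lam) (hγ : 0 < γ) (hα₀ : 0 < α₀) (hβ : 0 < β) (hμs : 0 < μs)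
    (P : EuclideanSpace ℝ (Fin n) → EuclideanSpace ℝ (Fin n))
    (hP : ∀ z, P z ∈ X ∧ ∀ y ∈ X, ‖z - P z‖ ≤ ‖z - y‖)
    (x x' : ℝ → EuclideanSpace ℝ (Fin n))
    (hder : ∀ t ∈ Ici (0 : ℝ), HasDerivWithinAt x (x' t) (Ici 0) t)
    (hode : ∀ t ∈ Ici (0 : ℝ),
      x' t = γ • (P (x t - f' (x t) - lam • gradPhi (x t) (muFun α₀ β μs t)) - x t))
    (hxX : ∀ t ∈ Ici (0 : ℝ), x t ∈ X)
    (Lf : ℝ) (hLf : ∀ y ∈ X, ∀ i, |f' y i| ≤ Lf)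
    (hA1 : (∀ i, v i ≠ 0 → μs < v i) ∧
      μs < 3 * lam / (2 * ((⨆ i, v i) + Lf)) ∧ μs < 2 * lam / (n * Lf))
    :
    (∀ xbar : EuclideanSpace ℝ (Fin n),
      (∃ u : ℕ → ℝ, Tendsto u atTop atTop ∧ Tendsto (fun k => x (u k)) atTop (nhds xbar)) →
      (∀ i, xbar i = 0 ∨ μs / 6 ≤ xbar i) ∧
      {i | 0 ≤ xbar i ∧ xbar i < μs / 6} = {i | xbar i = 0}) ∧
    (∀ xhat xtil : EuclideanSpace ℝ (Fin n),
      (∃ u : ℕ → ℝ, Tendsto u atTop atTop ∧ Tendsto (fun k => x (u k)) atTop (nhds xhat)) →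
      (∃ u : ℕ → ℝ, Tendsto u atTop atTop ∧ Tendsto (fun k => x (u k)) atTop (nhds xtil)) →
      {i | 0 ≤ xhat i ∧ xhat i < μs / 6} = {i | 0 ≤ xtil i ∧ xtil i < μs / 6}) := by
  have hc : 0 < μs / 6 := by positivity
  obtain ⟨T, hT⟩ := eventually_atTop.1 ((eventually_coord_deriv_eq_neg_mul_of_lt hX hlam hα₀ hβ
    hμs hP hLf hA1.2.1 hode hxX).and (eventually_ge_atTop 0))
  have hdich (i : Fin n) :
      Tendsto (fun t => x t i) atTop (𝓝 0) ∨ ∀ᶠ t in atTop, μs / 6 ≤ x t i :=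
    tendsto_zero_or_eventually_ge_of_deriv_eq_neg_mul_below (g' := fun t => x' t i) hγ hc
      (fun t ht => ((EuclideanSpace.proj (𝕜 := ℝ) i).hasFDerivAt.comp_hasDerivWithinAt t
        (hder t (hT t ht).2)).mono (Ici_subset_Ici.2 (hT T le_rfl).2))
      (fun t ht => (hT t ht).1 i)
  have hacc (xb : EuclideanSpace ℝ (Fin n))
      (hxb : ∃ u : ℕ → ℝ, Tendsto u atTop atTop ∧ Tendsto (fun k => x (u k)) atTop (𝓝 xb))
      (i : Fin n) :
      (xb i = 0 ∨ μs / 6 ≤ xb i) ∧ (xb i = 0 ↔ Tendsto (fun t => x t i) atTop (𝓝 0)) := by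
    obtain ⟨u, hu, hxu⟩ := hxb
    exact eq_zero_or_le_and_eq_zero_iff_of_tendsto_comp hc (hdich i) hu
      (((PiLp.continuous_apply 2 _ i).tendsto xb).comp hxu)
  have hsmall (xb : EuclideanSpace ℝ (Fin n))
      (hxb : ∃ u : ℕ → ℝ, Tendsto u atTop atTop ∧ Tendsto (fun k => x (u k)) atTop (𝓝 xb)) :
      {i | 0 ≤ xb i ∧ xb i < μs / 6} = {i | xb i = 0} :=
    Set.ext fun i => nonneg_and_lt_iff_eq_zero hc (hacc xb hxb i).1
  refine ⟨fun xb hxb => ⟨fun i => (hacc xb hxb i).1, hsmall xb hxb⟩, fun xh xt h1 h2 => ?_⟩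
  rw [hsmall xh h1, hsmall xt h2]
  exact Set.ext fun i => (hacc xh h1 i).2.trans (hacc xt h2 i).2.symm

theorem stmt10 {n : ℕ}
    (v : EuclideanSpace ℝ (Fin n)) (hv : ∀ i, 0 ≤ v i)
    (X : Set (EuclideanSpace ℝ (Fin n)))
    (hX : X = {x : EuclideanSpace ℝ (Fin n) | ∀ i, 0 ≤ x i ∧ x i ≤ v i})
    (f : EuclideanSpace ℝ (Fin n) → ℝ)
    (f' : EuclideanSpace ℝ (Fin n) → EuclideanSpace ℝ (Fin n))
    (hf : ∀ y, HasGradientAt f (f' y) y)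
    (hconv : ConvexOn ℝ univ f)
    (hlip : LocallyLipschitz f')
    (lam γ α₀ β μs : ℝ)
    (hlam : 0 < lam) (hγ : 0 < γ) (hα₀ : 0 < α₀) (hβ : 0 < β) (hμs : 0 < μs)
    (P : EuclideanSpace ℝ (Fin n) → EuclideanSpace ℝ (Fin n))
    (hP : ∀ z, P z ∈ X ∧ ∀ y ∈ X, ‖z - P z‖ ≤ ‖z - y‖)
    (x₀ : EuclideanSpace ℝ (Fin n)) (hx₀ : x₀ ∈ X)
    (x x' : ℝ → EuclideanSpace ℝ (Fin n))
    (hx0 : x 0 = x₀)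
    (hder : ∀ t ∈ Ici (0 : ℝ), HasDerivWithinAt x (x' t) (Ici 0) t)
    (hode : ∀ t ∈ Ici (0 : ℝ),
      x' t = γ • (P (x t - f' (x t) - lam • gradPhi (x t) (muFun α₀ β μs t)) - x t))
    (hx'c : ContinuousOn x' (Ici 0))
    (hxX : ∀ t ∈ Ici (0 : ℝ), x t ∈ X)
    (hn : 0 < n)
    (Lf : ℝ) (hLf0 : 0 < Lf) (hLf : ∀ y ∈ X, ∀ i, |f' y i| ≤ Lf)
    (hA1 : (∀ i, v i ≠ 0 → μs < v i) ∧
      μs < 3 * lam / (2 * ((⨆ i, v i) + Lf)) ∧ μs < 2 * lam / (n * Lf))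
    :
    (∀ xbar : EuclideanSpace ℝ (Fin n),
      (∃ u : ℕ → ℝ, Tendsto u atTop atTop ∧ Tendsto (fun k => x (u k)) atTop (nhds xbar)) →
      (∀ i, xbar i = 0 ∨ μs / 6 ≤ xbar i) ∧
      {i | 0 ≤ xbar i ∧ xbar i < μs / 6} = {i | xbar i = 0}) ∧
    (∀ xhat xtil : EuclideanSpace ℝ (Fin n),
      (∃ u : ℕ → ℝ, Tendsto u atTop atTop ∧ Tendsto (fun k => x (u k)) atTop (nhds xhat)) →
      (∃ u : ℕ → ℝ, Tendsto u atTop atTop ∧ Tendsto (fun k => x (u k)) atTop (nhds xtil)) →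
      {i | 0 ≤ xhat i ∧ xhat i < μs / 6} = {i | 0 ≤ xtil i ∧ xtil i < μs / 6}) :=
  stmt10_general v X hX f' lam γ α₀ β μs hlam hγ hα₀ hβ hμs P hP x x' hder hode hxX Lf hLf hA1
end

section
/- Let x* ∈ X and let Z(x*) = {i : x*_i = 0} and X_Z(x*) = {y ∈ X : y_i = 0 for all i ∈ Z(x*)}. Then x* is a local minimizer of f(x) + λ‖x‖₀ over X if and only if x* is a local minimizer of f over X_Z(x*). -/
/-!
Near `xs` no nonzero coordinate of `xs` can vanish, so `‖x‖₀ ≥ ‖xs‖₀` there, with a jump of at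
least one as soon as `x` leaves the face `X_Z(xs)`. On the face the penalty is at most `λ‖xs‖₀`,
which gives one direction. Off the face the penalty grows by at least `λ`, which by continuity
of `f` outweighs the change of `f` close to `xs`; on the face `f` alone decides.
-/

open Filter Set
open scoped NNReal

open scoped Topology

section PenalizedLocalMin

variable {E : Type*} [TopologicalSpace E] {f p : E → ℝ} {S T : Set E} {a : E}

theorem IsLocalMinOn.of_add_of_le (h : IsLocalMinOn (fun x => f x + p x) S a) (hTS : T ⊆ S)
    (hp : ∀ x ∈ T, p x ≤ p a) : IsLocalMinOn f T a := by
  filter_upwards [h.on_subset hTS, self_mem_nhdsWithin] with x hx hxT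
  linarith [hp x hxT]

theorem IsLocalMinOn.add_of_le_of_add_le (h : IsLocalMinOn f T a) (hf : LowerSemicontinuousAt f a)
    {c : ℝ} (hc : 0 < c) (hmono : ∀ᶠ x in 𝓝[S] a, p a ≤ p x)
    (hjump : ∀ᶠ x in 𝓝[S] a, x ∉ T → p a + c ≤ p x) :
    IsLocalMinOn (fun x => f x + p x) S a := by
  have hT : ∀ᶠ x in 𝓝 a, x ∈ T → f a ≤ f x := eventually_nhdsWithin_iff.mp h
  have hlow : ∀ᶠ x in 𝓝 a, f a - c < f x := hf _ (by linarith)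
  filter_upwards [eventually_nhdsWithin_of_eventually_nhds hT,
    eventually_nhdsWithin_of_eventually_nhds hlow, hmono, hjump] with x hxT hxlow hxmono hxjump
  by_cases hx : x ∈ T
  · linarith [hxT hx]
  · linarith [hxjump hx]

end PenalizedLocalMin

section Norm0

variable {n : ℕ} {x y : EuclideanSpace ℝ (Fin n)}

theorem norm0_eq_ncard (x : EuclideanSpace ℝ (Fin n)) : norm0 x = {i | x i ≠ 0}.ncard :=
  Nat.card_coe_set_eq _

theorem norm0_le_norm0 (h : ∀ i, x i ≠ 0 → y i ≠ 0) : norm0 x ≤ norm0 y := by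
  rw [norm0_eq_ncard, norm0_eq_ncard]
  exact Set.ncard_le_ncard h

theorem norm0_lt_norm0 (h : ∀ i, x i ≠ 0 → y i ≠ 0) {j : Fin n} (hxj : x j = 0)
    (hyj : y j ≠ 0) : norm0 x < norm0 y := by
  rw [norm0_eq_ncard, norm0_eq_ncard]
  exact Set.ncard_lt_ncard ⟨h, fun hyx => hyx hyj hxj⟩

theorem eventually_ne_zero_of_ne_zero (x : EuclideanSpace ℝ (Fin n)) :
    ∀ᶠ y in 𝓝 x, ∀ i, x i ≠ 0 → y i ≠ 0 := by
  refine eventually_all.mpr fun i => ?_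
  by_cases hi : x i = 0
  · exact Eventually.of_forall fun _ hne => absurd hi hne
  · filter_upwards [(EuclideanSpace.proj (𝕜 := ℝ) i).continuous.continuousAt.eventually_ne hi]
      with y hy _ using hy

theorem eventually_norm0_le (x : EuclideanSpace ℝ (Fin n)) : ∀ᶠ y in 𝓝 x, norm0 x ≤ norm0 y :=
  (eventually_ne_zero_of_ne_zero x).mono fun _ => norm0_le_norm0

theorem eventually_norm0_lt (x : EuclideanSpace ℝ (Fin n)) :
    ∀ᶠ y in 𝓝 x, (¬∀ i, x i = 0 → y i = 0) → norm0 x < norm0 y := by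
  filter_upwards [eventually_ne_zero_of_ne_zero x] with y hy hxy
  push Not at hxy
  obtain ⟨j, hxj, hyj⟩ := hxy
  exact norm0_lt_norm0 hy hxj hyj

end Norm0

theorem stmt12_general {n : ℕ} (v : EuclideanSpace ℝ (Fin n))
    (lam : ℝ) (hlam : 0 < lam)
    (f : EuclideanSpace ℝ (Fin n) → ℝ) (hf : Continuous f)
    (xs : EuclideanSpace ℝ (Fin n)) :
    IsLocalMinOn (fun x => f x + lam * (norm0 x : ℝ))
      {x : EuclideanSpace ℝ (Fin n) | ∀ i, 0 ≤ x i ∧ x i ≤ v i} xs ↔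
    IsLocalMinOn f
      {x : EuclideanSpace ℝ (Fin n) |
        (∀ i, 0 ≤ x i ∧ x i ≤ v i) ∧ ∀ i, xs i = 0 → x i = 0} xs := by
  constructor
  · intro h
    refine h.of_add_of_le (fun x hx => hx.1) fun x hx => ?_
    have : norm0 x ≤ norm0 xs := norm0_le_norm0 fun i hxi hxsi => hxi (hx.2 i hxsi)
    gcongr
  · intro h
    refine h.add_of_le_of_add_le (hf.lowerSemicontinuous xs) hlam ?_ ?_
    · filter_upwards [nhdsWithin_le_nhds (eventually_norm0_le xs)] with x hx
      gcongr
    · filter_upwards [self_mem_nhdsWithin, nhdsWithin_le_nhds (eventually_norm0_lt xs)]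
        with x hxX hx hxZ
      have : (norm0 xs : ℝ) + 1 ≤ norm0 x := by exact_mod_cast hx fun hZ => hxZ ⟨hxX, hZ⟩
      linarith [mul_le_mul_of_nonneg_left this hlam.le]

theorem stmt12 {n : ℕ} (v : EuclideanSpace ℝ (Fin n)) (hv : ∀ i, 0 ≤ v i)
    (lam : ℝ) (hlam : 0 < lam)
    (f : EuclideanSpace ℝ (Fin n) → ℝ) (hf : Continuous f)
    (xs : EuclideanSpace ℝ (Fin n))
    (hxs : xs ∈ {x : EuclideanSpace ℝ (Fin n) | ∀ i, 0 ≤ x i ∧ x i ≤ v i}) :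
    IsLocalMinOn (fun x => f x + lam * (norm0 x : ℝ))
      {x : EuclideanSpace ℝ (Fin n) | ∀ i, 0 ≤ x i ∧ x i ≤ v i} xs ↔
    IsLocalMinOn f
      {x : EuclideanSpace ℝ (Fin n) |
        (∀ i, 0 ≤ x i ∧ x i ≤ v i) ∧ ∀ i, xs i = 0 → x i = 0} xs :=
  stmt12_general v lam hlam f hf xs
end

section
/- Let x̄ ∈ X, μ* > 0, and let x̄^{μ*} be the μ*-update point of x̄. Then x̄^{μ*} is a strict local minimizer of f(x) + λ‖x‖₀ over X_K(x̄): there exists δ > 0 such that f(x̄^{μ*}) + λ‖x̄^{μ*}‖₀ < f(x) + λ‖x‖₀ for every x ∈ X_K(x̄) with x ≠ x̄^{μ*} and ‖x − x̄^{μ*}‖ < δ. -/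
open Filter Set
open scoped NNReal

/-!
Every point `y` of `X_K(x̄)` keeps the nonzero entries of the update point `x̄^{μ*}`, since those
are exactly the entries of `x̄` indexed by `K(x̄)`. Hence `y ≠ x̄^{μ*}` forces `y` to have an extra
nonzero entry, so the penalty `λ‖·‖₀` jumps by at least `λ`, while near `x̄^{μ*}` continuity keeps
`f` from dropping by `λ`.
-/

lemma norm0_lt_norm0_of_eq_on_support {n : ℕ} {x y : EuclideanSpace ℝ (Fin n)}
    (hxy : ∀ i, x i ≠ 0 → y i = x i) (hne : y ≠ x) : norm0 x < norm0 y := by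
  have hssub : {i | x i ≠ 0} ⊂ {i | y i ≠ 0} := by
    refine ⟨fun i hi => by simpa [hxy i hi] using hi, fun hsub => hne ?_⟩
    ext i
    by_contra hi
    have hxi : x i = 0 := not_not.mp fun h => hi (hxy i h)
    exact hsub (show y i ≠ 0 by rwa [hxi] at hi) hxi
  exact Set.ncard_lt_ncard hssub (Set.toFinite _)

lemma eq_of_update_ne_zero {n : ℕ} {μs : ℝ} {v xbar xup y : EuclideanSpace ℝ (Fin n)}
    (hxbar : ∀ i, 0 ≤ xbar i ∧ xbar i ≤ v i)
    (hxup : ∀ i, xup i = if μs / 2 ≤ |xbar i| then xbar i else 0)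
    (hyK : ∀ i, μs / 2 ≤ xbar i ∧ xbar i ≤ v i → y i = xbar i)
    (i : Fin n) (hi : xup i ≠ 0) : y i = xup i := by
  rw [hxup i, abs_of_nonneg (hxbar i).1] at hi ⊢
  split_ifs at hi ⊢ with hK
  · exact hyK i ⟨hK, (hxbar i).2⟩
  · exact absurd rfl hi

theorem stmt16_general {n : ℕ} (v : EuclideanSpace ℝ (Fin n))
    (lam μs : ℝ) (hlam : 0 < lam)
    (f : EuclideanSpace ℝ (Fin n) → ℝ) (hf : Continuous f)
    (xbar : EuclideanSpace ℝ (Fin n))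
    (hxbar : xbar ∈ {x : EuclideanSpace ℝ (Fin n) | ∀ i, 0 ≤ x i ∧ x i ≤ v i})
    (xup : EuclideanSpace ℝ (Fin n))
    (hxup : ∀ i, xup i = if μs / 2 ≤ |xbar i| then xbar i else 0) :
    ∃ δ > (0 : ℝ), ∀ y ∈ {y : EuclideanSpace ℝ (Fin n) |
        (∀ i, 0 ≤ y i ∧ y i ≤ v i) ∧
        ∀ i, μs / 2 ≤ xbar i ∧ xbar i ≤ v i → y i = xbar i},
      y ≠ xup → ‖y - xup‖ < δ →
      f xup + lam * (norm0 xup : ℝ) < f y + lam * (norm0 y : ℝ) := by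
  obtain ⟨δ, hδ, hfδ⟩ := Metric.continuous_iff.mp hf xup lam hlam
  refine ⟨δ, hδ, fun y ⟨_, hyK⟩ hne hdist => ?_⟩
  have hcard : norm0 xup < norm0 y :=
    norm0_lt_norm0_of_eq_on_support (eq_of_update_ne_zero hxbar hxup hyK) hne
  have hjump : lam * norm0 xup + lam ≤ lam * norm0 y := by
    rw [← mul_add_one]
    exact mul_le_mul_of_nonneg_left (by exact_mod_cast hcard) hlam.le
  have hfy : |f y - f xup| < lam := hfδ y (by rwa [dist_eq_norm])
  linarith [(abs_lt.mp hfy).1]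

theorem stmt16 {n : ℕ} (v : EuclideanSpace ℝ (Fin n)) (hv : ∀ i, 0 ≤ v i)
    (lam μs : ℝ) (hlam : 0 < lam) (hμs : 0 < μs)
    (f : EuclideanSpace ℝ (Fin n) → ℝ) (hf : Continuous f)
    (xbar : EuclideanSpace ℝ (Fin n))
    (hxbar : xbar ∈ {x : EuclideanSpace ℝ (Fin n) | ∀ i, 0 ≤ x i ∧ x i ≤ v i})
    (xup : EuclideanSpace ℝ (Fin n))
    (hxup : ∀ i, xup i = if μs / 2 ≤ |xbar i| then xbar i else 0) :
    ∃ δ > (0 : ℝ), ∀ y ∈ {y : EuclideanSpace ℝ (Fin n) |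
        (∀ i, 0 ≤ y i ∧ y i ≤ v i) ∧
        ∀ i, μs / 2 ≤ xbar i ∧ xbar i ≤ v i → y i = xbar i},
      y ≠ xup → ‖y - xup‖ < δ →
      f xup + lam * (norm0 xup : ℝ) < f y + lam * (norm0 y : ℝ) :=
  stmt16_general v lam μs hlam f hf xbar hxbar xup hxup
end

section
/- Let x̄ ∈ X, suppose Assumption 1 holds, and let x̄^{μ*} be the μ*-update point of x̄. Then f(x̄^{μ*}) + λ‖x̄^{μ*}‖₀ ≤ f(x̄) + λ‖x̄‖₀; moreover, if J(x̄) ≠ ∅, then f(x̄^{μ*}) + λ‖x̄^{μ*}‖₀ < f(x̄) + λ‖x̄‖₀. -/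
open Filter Set
open scoped NNReal

/-! Zeroing the entries of `x̄` below `μ*/2` gives the update point `x̄^{μ*}`. By convexity,
`f(x̄^{μ*}) - f(x̄) ≤ ⟨∇f(x̄^{μ*}), x̄^{μ*} - x̄⟩`, and each of the `k` removed entries contributes at
most `L_f μ*/2` to the inner product, while `‖·‖₀` drops by exactly `k`. Assumption 1 gives
`L_f μ*/2 < λ`, so the objective decreases by at least `k (λ - L_f μ*/2)`, which is positive
when `J(x̄) ≠ ∅`. -/

open Finset

theorem ConvexOn.sub_le_of_hasFDerivAt {E : Type*} [NormedAddCommGroup E] [NormedSpace ℝ E]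
    {f : E → ℝ} {f' : E →L[ℝ] ℝ} {x y : E} (hf : ConvexOn ℝ univ f)
    (hd : HasFDerivAt f f' y) : f y - f x ≤ f' (y - x) := by
  set g : ℝ → ℝ := fun t => f (t • (y - x) + x) with hg
  have hgconv : ConvexOn ℝ univ g := by
    simpa [hg, Function.comp_def, AffineMap.lineMap_apply, vsub_eq_sub, vadd_eq_add] using
      hf.comp_affineMap (AffineMap.lineMap x y : ℝ →ᵃ[ℝ] E)
  have hline : HasDerivAt (fun t : ℝ => t • (y - x) + x) (y - x) 1 := by
    simpa using ((hasDerivAt_id (1 : ℝ)).smul_const (y - x)).add_const x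
  have hgd : HasDerivAt g (f' (y - x)) 1 :=
    (by simpa using hd : HasFDerivAt f f' ((1 : ℝ) • (y - x) + x)).comp_hasDerivAt 1 hline
  simpa [hg, slope_def_field] using
    hgconv.slope_le_of_hasDerivAt (mem_univ 0) (mem_univ 1) one_pos hgd

theorem ConvexOn.sub_le_inner_of_hasGradientAt {E : Type*} [NormedAddCommGroup E]
    [InnerProductSpace ℝ E] [CompleteSpace E] {f : E → ℝ} {g x y : E} (hf : ConvexOn ℝ univ f)
    (hg : HasGradientAt f g y) : f y - f x ≤ inner ℝ g (y - x) :=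
  hf.sub_le_of_hasFDerivAt hg.hasFDerivAt

section HardThreshold

variable {n : ℕ}

noncomputable def hardThreshold (x : EuclideanSpace ℝ (Fin n)) (t : ℝ) :
    EuclideanSpace ℝ (Fin n) :=
  WithLp.toLp 2 fun i => if t ≤ |x i| then x i else 0

@[simp]
theorem hardThreshold_apply (x : EuclideanSpace ℝ (Fin n)) (t : ℝ) (i : Fin n) :
    hardThreshold x t i = if t ≤ |x i| then x i else 0 := rfl

noncomputable def smallSupport (x : EuclideanSpace ℝ (Fin n)) (t : ℝ) : Finset (Fin n) :=
  univ.filter fun i => x i ≠ 0 ∧ |x i| < t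

theorem mem_smallSupport {x : EuclideanSpace ℝ (Fin n)} {t : ℝ} {i : Fin n} :
    i ∈ smallSupport x t ↔ x i ≠ 0 ∧ |x i| < t := by
  simp [smallSupport]

theorem norm0_eq_card_filter (x : EuclideanSpace ℝ (Fin n)) :
    norm0 x = #(univ.filter fun i => x i ≠ 0) := by
  rw [norm0, Nat.card_eq_fintype_card, Fintype.card_subtype]

theorem norm0_eq_norm0_hardThreshold_add_card (x : EuclideanSpace ℝ (Fin n)) (t : ℝ) :
    norm0 x = norm0 (hardThreshold x t) + #(smallSupport x t) := by
  have hsupp : (univ.filter fun i => hardThreshold x t i ≠ 0)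
      = (univ.filter fun i => x i ≠ 0).filter fun i => t ≤ |x i| := by
    ext i; by_cases h : t ≤ |x i| <;> simp [h]
  have hsmall : smallSupport x t = (univ.filter fun i => x i ≠ 0).filter fun i => ¬ t ≤ |x i| := by
    ext i; simp [smallSupport]
  rw [norm0_eq_card_filter, norm0_eq_card_filter, hsupp, hsmall,
    card_filter_add_card_filter_not]

theorem hardThreshold_sub_eq_zero_of_notMem {x : EuclideanSpace ℝ (Fin n)} {t : ℝ} {i : Fin n}
    (hi : i ∉ smallSupport x t) : hardThreshold x t i - x i = 0 := by
  rw [mem_smallSupport, not_and, not_lt] at hi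
  by_cases h : t ≤ |x i|
  · simp [h]
  · simp [not_imp_comm.mp hi h]

theorem inner_hardThreshold_sub_le {x g : EuclideanSpace ℝ (Fin n)} {t L : ℝ}
    (hg : ∀ i, |g i| ≤ L) :
    inner ℝ g (hardThreshold x t - x) ≤ #(smallSupport x t) * (L * t) := by
  have hterm : ∀ i ∈ smallSupport x t, g i * (hardThreshold x t i - x i) ≤ L * t := by
    intro i hi
    have hxt : |x i| < t := (mem_smallSupport.mp hi).2
    have hzero : hardThreshold x t i = 0 := by simp [not_le.mpr hxt]
    calc g i * (hardThreshold x t i - x i) ≤ |g i| * |x i| := by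
          rw [hzero, zero_sub, ← abs_neg (x i), ← abs_mul]; exact le_abs_self _
      _ ≤ L * t := mul_le_mul (hg i) hxt.le (abs_nonneg _) ((abs_nonneg _).trans (hg i))
  calc inner ℝ g (hardThreshold x t - x)
      = ∑ i ∈ smallSupport x t, g i * (hardThreshold x t i - x i) := by
        rw [PiLp.inner_apply, ← sum_subset (subset_univ (smallSupport x t))]
        · simp only [PiLp.sub_apply, RCLike.inner_apply, conj_trivial, mul_comm]
        · intro i _ hi
          rw [PiLp.sub_apply, hardThreshold_sub_eq_zero_of_notMem hi, inner_zero_right]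
    _ ≤ ∑ _i ∈ smallSupport x t, L * t := sum_le_sum hterm
    _ = #(smallSupport x t) * (L * t) := by rw [sum_const, nsmul_eq_mul]

end HardThreshold

theorem add_mul_norm0_hardThreshold_add_card_mul_le {n : ℕ} {f : EuclideanSpace ℝ (Fin n) → ℝ}
    {g x : EuclideanSpace ℝ (Fin n)} {t L lam : ℝ} (hconv : ConvexOn ℝ univ f)
    (hf : HasGradientAt f g (hardThreshold x t)) (hg : ∀ i, |g i| ≤ L) :
    f (hardThreshold x t) + lam * norm0 (hardThreshold x t)
        + #(smallSupport x t) * (lam - L * t) ≤ f x + lam * norm0 x := by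
  have hdescent := hconv.sub_le_inner_of_hasGradientAt (x := x) hf
  have hinner := inner_hardThreshold_sub_le (x := x) (t := t) hg
  rw [norm0_eq_norm0_hardThreshold_add_card x t, Nat.cast_add]
  linarith

theorem stmt17_general {n : ℕ} (v : EuclideanSpace ℝ (Fin n)) (hv : ∀ i, 0 ≤ v i)
    (X : Set (EuclideanSpace ℝ (Fin n)))
    (hX : X = {x : EuclideanSpace ℝ (Fin n) | ∀ i, 0 ≤ x i ∧ x i ≤ v i})
    (f : EuclideanSpace ℝ (Fin n) → ℝ)
    (f' : EuclideanSpace ℝ (Fin n) → EuclideanSpace ℝ (Fin n))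
    (hf : ∀ y, HasGradientAt f (f' y) y)
    (hconv : ConvexOn ℝ univ f)
    (lam μs : ℝ) (hμs : 0 < μs)
    (hn : 0 < n)
    (Lf : ℝ) (hLf0 : 0 < Lf) (hLf : ∀ y ∈ X, ∀ i, |f' y i| ≤ Lf)
    (hA1 : (∀ i, v i ≠ 0 → μs < v i) ∧
      μs < 3 * lam / (2 * ((⨆ i, v i) + Lf)) ∧ μs < 2 * lam / (n * Lf))
    (xbar : EuclideanSpace ℝ (Fin n)) (hxbar : xbar ∈ X)
    (xup : EuclideanSpace ℝ (Fin n))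
    (hxup : ∀ i, xup i = if μs / 2 ≤ |xbar i| then xbar i else 0) :
    f xup + lam * (norm0 xup : ℝ) ≤ f xbar + lam * (norm0 xbar : ℝ) ∧
    ({i | μs / 6 ≤ xbar i ∧ xbar i < μs / 2}.Nonempty →
      f xup + lam * (norm0 xup : ℝ) < f xbar + lam * (norm0 xbar : ℝ)) := by
  subst hX
  obtain rfl : xup = hardThreshold xbar (μs / 2) := by ext i; simp [hxup]
  have hupX : ∀ i, |f' (hardThreshold xbar (μs / 2)) i| ≤ Lf :=
    hLf _ fun i => by by_cases h : μs / 2 ≤ |xbar i| <;> simp [h, hxbar i, hv i]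
  have hgap : 0 < lam - Lf * (μs / 2) := by
    have hnLf : μs * (n * Lf) < 2 * lam := (lt_div_iff₀ (by positivity)).mp hA1.2.2
    have hn1 : (1 : ℝ) ≤ n := by exact_mod_cast hn
    nlinarith [mul_le_mul_of_nonneg_right hn1 (by positivity : 0 ≤ Lf * μs)]
  have key := add_mul_norm0_hardThreshold_add_card_mul_le (lam := lam) hconv (hf _) hupX
  refine ⟨by nlinarith [Nat.cast_nonneg (α := ℝ) #(smallSupport xbar (μs / 2))], ?_⟩
  rintro ⟨i, hi_lower, hi_upper⟩
  have hi : i ∈ smallSupport xbar (μs / 2) := by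
    have hpos : 0 < xbar i := by linarith
    exact mem_smallSupport.mpr ⟨hpos.ne', by rwa [abs_of_pos hpos]⟩
  have hcard : (1 : ℝ) ≤ #(smallSupport xbar (μs / 2)) := by
    exact_mod_cast card_pos.mpr ⟨i, hi⟩
  nlinarith

theorem stmt17 {n : ℕ} (v : EuclideanSpace ℝ (Fin n)) (hv : ∀ i, 0 ≤ v i)
    (X : Set (EuclideanSpace ℝ (Fin n)))
    (hX : X = {x : EuclideanSpace ℝ (Fin n) | ∀ i, 0 ≤ x i ∧ x i ≤ v i})
    (f : EuclideanSpace ℝ (Fin n) → ℝ)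
    (f' : EuclideanSpace ℝ (Fin n) → EuclideanSpace ℝ (Fin n))
    (hf : ∀ y, HasGradientAt f (f' y) y)
    (hconv : ConvexOn ℝ univ f)
    (hlip : LocallyLipschitz f')
    (lam μs : ℝ) (hlam : 0 < lam) (hμs : 0 < μs)
    (hn : 0 < n)
    (Lf : ℝ) (hLf0 : 0 < Lf) (hLf : ∀ y ∈ X, ∀ i, |f' y i| ≤ Lf)
    (hA1 : (∀ i, v i ≠ 0 → μs < v i) ∧
      μs < 3 * lam / (2 * ((⨆ i, v i) + Lf)) ∧ μs < 2 * lam / (n * Lf))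
    (xbar : EuclideanSpace ℝ (Fin n)) (hxbar : xbar ∈ X)
    (xup : EuclideanSpace ℝ (Fin n))
    (hxup : ∀ i, xup i = if μs / 2 ≤ |xbar i| then xbar i else 0) :
    f xup + lam * (norm0 xup : ℝ) ≤ f xbar + lam * (norm0 xbar : ℝ) ∧
    ({i | μs / 6 ≤ xbar i ∧ xbar i < μs / 2}.Nonempty →
      f xup + lam * (norm0 xup : ℝ) < f xbar + lam * (norm0 xbar : ℝ)) :=
  stmt17_general v hv X hX f f' hf hconv lam μs hμs hn Lf hLf0 hLf hA1 xbar hxbar xup hxup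
end
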